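/- arXiv:2208.00006 — 11 statements merged into one kernel-verified Lean document; each statement's English description precedes it below -/
import Mathlib

section
/- The function ψ is strictly concave–convex on (0,∞) with a unique inflection point: there exists a unique b̂ ∈ (0,∞) such that ψ''(b̂) = 0; moreover ψ''(x) < 0 for all x ∈ (0,b̂), ψ''(x) > 0 for all x ∈ (b̂,∞), and at the inflection point q·ψ(b̂) = μ·ψ'(b̂). -/
/-!
Writing `sinh` through exponentials, `ψ x = (C/2)(exp (α x) - exp (β x))` with
`C = σ²/Δ`, `α = (Δ - μ)/σ² > 0 > β = -(Δ + μ)/σ²`. Then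
`ψ'' x = exp (β x) · ((C/2) α² exp ((α - β) x) - (C/2) β²)`, whose second factor is strictly
increasing and vanishes exactly once, at `log (β²/α²)/(α - β) > 0` because `|β| > α`.
Since `α` and `β` are the roots of `(σ²/2) λ² + μ λ - q`, `ψ` solves
`(σ²/2) ψ'' + μ ψ' - q ψ = 0`; at the inflection point this reads `q ψ = μ ψ'`.
-/

open Real

noncomputable section

def twoExp (A α B β x : ℝ) : ℝ := A * exp (α * x) + B * exp (β * x)

def twoExpRoot (P α Q β : ℝ) : ℝ := log (-Q / P) / (α - β)

section
variable (A α B β : ℝ)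

theorem hasDerivAt_twoExp (x : ℝ) :
    HasDerivAt (twoExp A α B β) (twoExp (A * α) α (B * β) β x) x := by
  have hexp (γ : ℝ) : HasDerivAt (fun x => exp (γ * x)) (exp (γ * x) * γ) x := by
    simpa using ((hasDerivAt_id x).const_mul γ).exp
  exact (((hexp α).const_mul A).add ((hexp β).const_mul B)).congr_deriv (by rw [twoExp]; ring)

theorem deriv_twoExp : deriv (twoExp A α B β) = twoExp (A * α) α (B * β) β :=
  funext fun x => (hasDerivAt_twoExp A α B β x).deriv

theorem deriv_deriv_twoExp :
    deriv (deriv (twoExp A α B β)) = twoExp (A * α ^ 2) α (B * β ^ 2) β := by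
  rw [deriv_twoExp, deriv_twoExp, mul_assoc, mul_assoc, ← sq, ← sq]

theorem twoExp_ode {a b k : ℝ} (hα : a * α ^ 2 + b * α + k = 0)
    (hβ : a * β ^ 2 + b * β + k = 0) (x : ℝ) :
    a * deriv (deriv (twoExp A α B β)) x + b * deriv (twoExp A α B β) x
      + k * twoExp A α B β x = 0 := by
  rw [deriv_deriv_twoExp, deriv_twoExp]
  simp only [twoExp]
  linear_combination A * exp (α * x) * hα + B * exp (β * x) * hβ

theorem mul_exp_mul_mul_sinh_mul (C a b x : ℝ) :
    C * exp (a * x) * sinh (b * x) = twoExp (C / 2) (a + b) (-(C / 2)) (a - b) x := by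
  rw [twoExp, sinh_eq, add_mul, sub_mul, exp_add, exp_sub, exp_neg]
  field_simp
  ring

end

section
variable {P α Q β : ℝ}

theorem twoExp_eq_exp_mul (x : ℝ) :
    twoExp P α Q β x = exp (β * x) * (P * exp ((α - β) * x) + Q) := by
  rw [twoExp, sub_mul, exp_sub]
  field_simp

theorem twoExpRoot_spec (hP : 0 < P) (hQ : Q < 0) (hαβ : β < α) :
    P * exp ((α - β) * twoExpRoot P α Q β) + Q = 0 := by
  rw [twoExpRoot, mul_div_cancel₀ _ (sub_pos.2 hαβ).ne', exp_log (div_pos (neg_pos.2 hQ) hP)]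
  field_simp
  ring

theorem strictMono_mul_exp_add (hP : 0 < P) (hαβ : β < α) :
    StrictMono fun x => P * exp ((α - β) * x) + Q := fun _ _ h =>
  add_lt_add_left (mul_lt_mul_of_pos_left (exp_lt_exp.2
    (mul_lt_mul_of_pos_left h (sub_pos.2 hαβ))) hP) Q

theorem twoExp_pos_iff (hP : 0 < P) (hQ : Q < 0) (hαβ : β < α) {x : ℝ} :
    0 < twoExp P α Q β x ↔ twoExpRoot P α Q β < x := by
  rw [twoExp_eq_exp_mul, mul_pos_iff_of_pos_left (exp_pos _), ← twoExpRoot_spec hP hQ hαβ]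
  exact (strictMono_mul_exp_add hP hαβ).lt_iff_lt

theorem twoExp_neg_iff (hP : 0 < P) (hQ : Q < 0) (hαβ : β < α) {x : ℝ} :
    twoExp P α Q β x < 0 ↔ x < twoExpRoot P α Q β := by
  rw [twoExp_eq_exp_mul, ← neg_pos, ← mul_neg, mul_pos_iff_of_pos_left (exp_pos _), neg_pos,
    ← twoExpRoot_spec hP hQ hαβ]
  exact (strictMono_mul_exp_add hP hαβ).lt_iff_lt

theorem twoExp_eq_zero_iff (hP : 0 < P) (hQ : Q < 0) (hαβ : β < α) {x : ℝ} :
    twoExp P α Q β x = 0 ↔ x = twoExpRoot P α Q β := by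
  rw [twoExp_eq_exp_mul, mul_eq_zero_iff_left (exp_pos _).ne', ← twoExpRoot_spec hP hQ hαβ]
  exact (strictMono_mul_exp_add hP hαβ).injective.eq_iff

theorem twoExpRoot_pos (hP : 0 < P) (hαβ : β < α) (hPQ : P < -Q) :
    0 < twoExpRoot P α Q β :=
  div_pos (log_pos ((one_lt_div hP).2 hPQ)) (sub_pos.2 hαβ)

end

theorem twoExp_inflection {A α β : ℝ} (hA : 0 < A) (hα : 0 < α) (hαβ : α < -β) :
    ∃ b, 0 < b ∧ deriv (deriv (twoExp A α (-A) β)) b = 0 ∧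
      (∀ x, x < b → deriv (deriv (twoExp A α (-A) β)) x < 0) ∧
      (∀ x, b < x → 0 < deriv (deriv (twoExp A α (-A) β)) x) ∧
      ∀ x, deriv (deriv (twoExp A α (-A) β)) x = 0 → x = b := by
  have hβα : β < α := by linarith
  have hP : 0 < A * α ^ 2 := mul_pos hA (pow_pos hα 2)
  have hQ : -A * β ^ 2 < 0 := by
    rw [neg_mul]
    exact neg_neg_of_pos (mul_pos hA (sq_pos_of_neg (by linarith)))
  have hPQ : A * α ^ 2 < -(-A * β ^ 2) := by
    rw [neg_mul, neg_neg, ← neg_sq β]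
    exact mul_lt_mul_of_pos_left (pow_lt_pow_left₀ hαβ hα.le two_ne_zero) hA
  rw [deriv_deriv_twoExp]
  exact ⟨_, twoExpRoot_pos hP hβα hPQ, (twoExp_eq_zero_iff hP hQ hβα).2 rfl,
    fun _ => (twoExp_neg_iff hP hQ hβα).2, fun _ => (twoExp_pos_iff hP hQ hβα).2,
    fun _ => (twoExp_eq_zero_iff hP hQ hβα).1⟩

end

/-- ψ is strictly concave–convex on (0,∞), with a unique inflection
point b̂ ∈ (0,∞): ψ''(b̂) = 0, ψ'' < 0 on (0,b̂), ψ'' > 0 on (b̂,∞), and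
q·ψ(b̂) = μ·ψ'(b̂). -/
theorem stmt_2 (μ σ q : ℝ) (hμ : 0 < μ) (hσ : 0 < σ) (hq : 0 < q)
    (Δ : ℝ) (hΔ : Δ = Real.sqrt (μ ^ 2 + 2 * q * σ ^ 2))
    (ψ : ℝ → ℝ)
    (hψ : ∀ x : ℝ, ψ x =
      σ ^ 2 / Δ * Real.exp (-(μ / σ ^ 2) * x) * Real.sinh (Δ * x / σ ^ 2)) :
    ∃ bhat : ℝ, 0 < bhat ∧ deriv (deriv ψ) bhat = 0 ∧
      (∀ x : ℝ, 0 < x → x < bhat → deriv (deriv ψ) x < 0) ∧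
      (∀ x : ℝ, bhat < x → 0 < deriv (deriv ψ) x) ∧
      q * ψ bhat = μ * deriv ψ bhat ∧
      ∀ b : ℝ, 0 < b → deriv (deriv ψ) b = 0 → b = bhat := by
  have hσ2 : 0 < σ ^ 2 := by positivity
  have hΔsq : Δ ^ 2 = μ ^ 2 + 2 * q * σ ^ 2 := by rw [hΔ, sq_sqrt (by positivity)]
  have hμΔ : μ < Δ := hΔ ▸ (lt_sqrt hμ.le).2 (lt_add_of_pos_right _ (by positivity))
  set C := σ ^ 2 / Δ
  set α := -(μ / σ ^ 2) + Δ / σ ^ 2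
  set β := -(μ / σ ^ 2) - Δ / σ ^ 2
  obtain rfl : ψ = twoExp (C / 2) α (-(C / 2)) β := funext fun x => by
    rw [hψ, mul_div_right_comm Δ, mul_exp_mul_mul_sinh_mul]
  have hα : σ ^ 2 / 2 * α ^ 2 + μ * α + -q = 0 := by
    simp only [α]; field_simp; linear_combination hΔsq
  have hβ : σ ^ 2 / 2 * β ^ 2 + μ * β + -q = 0 := by
    simp only [β]; field_simp; linear_combination hΔsq
  have hC : 0 < C / 2 := half_pos (div_pos hσ2 (hμ.trans hμΔ))
  have hΔ' : μ / σ ^ 2 < Δ / σ ^ 2 := div_lt_div_of_pos_right hμΔ hσ2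
  have hα0 : 0 < α := by simp only [α]; linarith
  have hαβ : α < -β := by simp only [α, β]; linarith [div_pos hμ hσ2]
  obtain ⟨b, hb0, hb, hneg, hpos, huniq⟩ := twoExp_inflection hC hα0 hαβ
  refine ⟨b, hb0, hb, fun x _ => hneg x, hpos, ?_, fun x _ => huniq x⟩
  have hode := twoExp_ode (C / 2) α (-(C / 2)) β hα hβ b
  rw [hb] at hode
  linarith
end

section
/- Let G : [0,∞) → ℝ be nondecreasing and differentiable, and suppose φ : [0,∞) → ℝ is three times continuously differentiable, satisfies φ(x) > 0 for all x ≥ 0, φ(x) → 0 as x → ∞, and (σ²/2)·φ''(x) + (μ − G(x))·φ'(x) − q·φ(x) = 0 for all x > 0. Then φ is strictly decreasing and strictly convex on (0,∞): φ'(x) < 0 and φ''(x) > 0 for all x > 0. -/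
/-!
At a critical point of `φ` the equation gives `(σ²/2) φ'' = q φ > 0`, so `φ'` can only cross
zero upwards; were `φ'` ever nonnegative it would stay positive, `φ` would increase, and could
not decay to `0`. Differentiating the equation, at a zero of `φ''` we get
`(σ²/2) φ''' = (q + G') φ' < 0`, so `φ''` can only cross zero downwards; were `φ''` ever
nonpositive, `φ'` would stay below a negative constant and `φ` would become negative.
-/

open Set Filter Topology

section SignCrossing

variable {g : ℝ → ℝ}

lemma exists_pos_right_of_deriv_pos {c b : ℝ} (hc : g c = 0) (hd : 0 < deriv g c)
    (hcb : c < b) : ∃ t ∈ Ioo c b, 0 < g t := by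
  have hsign := (eventually_nhdsWithin_sign_eq_of_deriv_pos hd hc).filter_mono
    (nhdsWithin_le_nhds (s := Ioi c))
  obtain ⟨t, hsign, ht⟩ := (hsign.and (Ioo_mem_nhdsGT hcb)).exists
  rw [sign_pos (sub_pos.2 ht.1), sign_eq_one_iff] at hsign
  exact ⟨t, ht, hsign⟩

lemma exists_neg_left_of_deriv_pos {a c : ℝ} (hc : g c = 0) (hd : 0 < deriv g c)
    (hac : a < c) : ∃ t ∈ Ioo a c, g t < 0 := by
  have hsign := (eventually_nhdsWithin_sign_eq_of_deriv_pos hd hc).filter_mono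
    (nhdsWithin_le_nhds (s := Iio c))
  obtain ⟨t, hsign, ht⟩ := (hsign.and (Ioo_mem_nhdsLT hac)).exists
  rw [sign_neg (sub_neg.2 ht.2), sign_eq_neg_one_iff] at hsign
  exact ⟨t, ht, hsign⟩

theorem pos_of_nonneg_of_deriv_pos_of_eq_zero {a b : ℝ} (hab : a < b)
    (hg : ContinuousOn g (Icc a b)) (hzero : ∀ c ∈ Icc a b, g c = 0 → 0 < deriv g c)
    (ha : 0 ≤ g a) : 0 < g b := by
  obtain ⟨a', ⟨haa', ha'b⟩, ha'⟩ : ∃ a' ∈ Ico a b, 0 < g a' := by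
    rcases ha.lt_or_eq with ha | ha
    · exact ⟨a, ⟨le_rfl, hab⟩, ha⟩
    · obtain ⟨t, ht, hgt⟩ :=
        exists_pos_right_of_deriv_pos ha.symm (hzero a ⟨le_rfl, hab.le⟩ ha.symm) hab
      exact ⟨t, Ioo_subset_Ico_self ht, hgt⟩
  by_contra! hb
  have hg' : ContinuousOn g (Icc a' b) := hg.mono (Icc_subset_Icc_left haa')
  have hT : IsCompact (Icc a' b ∩ g ⁻¹' Iic 0) :=
    isCompact_Icc.of_isClosed_subset (hg'.preimage_isClosed_of_isClosed isClosed_Icc isClosed_Iic)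
      inter_subset_left
  obtain ⟨c, ⟨hcI, hgc⟩, hleast⟩ := hT.exists_isLeast ⟨b, ⟨ha'b.le, le_rfl⟩, hb⟩
  have ha'c : a' < c := hcI.1.lt_of_ne (by rintro rfl; exact hgc.not_gt ha')
  have hgc0 : g c = 0 := by
    obtain ⟨t, ht, hgt⟩ := intermediate_value_Icc' ha'c.le (hg'.mono (Icc_subset_Icc_right hcI.2))
      ⟨hgc, ha'.le⟩
    have htc : c ≤ t := hleast ⟨⟨ht.1, ht.2.trans hcI.2⟩, hgt.le⟩
    rwa [le_antisymm ht.2 htc] at hgt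
  obtain ⟨t, ht, hgt⟩ :=
    exists_neg_left_of_deriv_pos hgc0 (hzero c ⟨haa'.trans hcI.1, hcI.2⟩ hgc0) ha'c
  exact (hleast ⟨⟨ht.1.le, ht.2.le.trans hcI.2⟩, hgt.le⟩).not_gt ht.2

end SignCrossing

theorem exists_lt_zero_of_deriv_le_neg {f : ℝ → ℝ} {a C : ℝ} (hC : C < 0)
    (hf : ContinuousOn f (Ici a)) (hf' : DifferentiableOn ℝ f (Ioi a))
    (hle : ∀ x ∈ Ioi a, deriv f x ≤ C) : ∃ x ∈ Ici a, f x < 0 := by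
  set x := a + (|f a| + 1) / -C
  have hax : a ≤ x := le_add_of_nonneg_right (div_nonneg (by positivity) (by linarith))
  have hmvt := (convex_Ici a).image_sub_le_mul_sub_of_deriv_le hf (by rwa [interior_Ici])
    (by rwa [interior_Ici]) a self_mem_Ici x hax hax
  have hCx : C * (x - a) = -(|f a| + 1) := by
    simp only [x, add_sub_cancel_left]
    field_simp [hC.ne]
  exact ⟨x, hax, by linarith [le_abs_self (f a)]⟩

section ODE

variable {μ σ q : ℝ} {G φ : ℝ → ℝ}

lemma deriv_deriv_pos_of_deriv_eq_zero {x : ℝ} (hq : 0 < q) (hpos : 0 < φ x)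
    (hODE : σ ^ 2 / 2 * deriv (deriv φ) x + (μ - G x) * deriv φ x - q * φ x = 0)
    (hcrit : deriv φ x = 0) : 0 < deriv (deriv φ) x := by
  rw [hcrit, mul_zero, add_zero, sub_eq_zero] at hODE
  exact pos_of_mul_pos_right (hODE ▸ mul_pos hq hpos) (by positivity)

theorem deriv_neg_of_ode (hq : 0 < q) (hφ : DifferentiableOn ℝ φ (Ioi 0))
    (hφ' : DifferentiableOn ℝ (deriv φ) (Ioi 0)) (hpos : ∀ x > 0, 0 < φ x)
    (hlim : Tendsto φ atTop (𝓝 0))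
    (hODE : ∀ x > 0, σ ^ 2 / 2 * deriv (deriv φ) x + (μ - G x) * deriv φ x - q * φ x = 0) :
    ∀ x > 0, deriv φ x < 0 := by
  intro a ha
  by_contra! h
  have hsub : Ici a ⊆ Ioi 0 := Ici_subset_Ioi.2 ha
  have hinc : ∀ x ∈ Ioi a, 0 < deriv φ x := fun x hx =>
    pos_of_nonneg_of_deriv_pos_of_eq_zero hx (hφ'.continuousOn.mono (Icc_subset_Ici_self.trans hsub))
      (fun c hc hcrit => deriv_deriv_pos_of_deriv_eq_zero hq (hpos c (hsub hc.1))
        (hODE c (hsub hc.1)) hcrit) h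
  have hmono : MonotoneOn φ (Ici a) :=
    monotoneOn_of_deriv_nonneg (convex_Ici a) (hφ.continuousOn.mono hsub)
      (by rw [interior_Ici]; exact hφ.mono (Ioi_subset_Ioi ha.le))
      (by rw [interior_Ici]; exact fun x hx => (hinc x hx).le)
  obtain ⟨x, hxφ, hxa⟩ :=
    ((hlim.eventually (gt_mem_nhds (hpos a ha))).and (eventually_ge_atTop a)).exists
  exact hxφ.not_ge (hmono self_mem_Ici hxa hxa)

theorem deriv_deriv_deriv_eq_of_ode {x : ℝ} (hx : 0 < x) (hG : DifferentiableAt ℝ G x)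
    (hφ : DifferentiableAt ℝ φ x) (hφ' : DifferentiableAt ℝ (deriv φ) x)
    (hφ'' : DifferentiableAt ℝ (deriv (deriv φ)) x)
    (hODE : ∀ x > 0, σ ^ 2 / 2 * deriv (deriv φ) x + (μ - G x) * deriv φ x - q * φ x = 0) :
    σ ^ 2 / 2 * deriv (deriv (deriv φ)) x + (μ - G x) * deriv (deriv φ) x
      = (q + deriv G x) * deriv φ x := by
  have hF : HasDerivAt (fun y => σ ^ 2 / 2 * deriv (deriv φ) y + (μ - G y) * deriv φ y - q * φ y)
      (σ ^ 2 / 2 * deriv (deriv (deriv φ)) x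
        + ((0 - deriv G x) * deriv φ x + (μ - G x) * deriv (deriv φ) x) - q * deriv φ x) x :=
    (((hφ''.hasDerivAt.const_mul (σ ^ 2 / 2)).add
    (((hasDerivAt_const x μ).sub hG.hasDerivAt).mul hφ'.hasDerivAt)).sub
      (hφ.hasDerivAt.const_mul q))
  have hF0 : (fun y => σ ^ 2 / 2 * deriv (deriv φ) y + (μ - G y) * deriv φ y - q * φ y)
      =ᶠ[𝓝 x] fun _ => 0 :=
    eventually_of_mem (Ioi_mem_nhds hx) hODE
  have := hF.deriv
  rw [hF0.deriv_eq, deriv_const] at this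
  linarith

theorem deriv_deriv_pos_of_ode (hq : 0 < q) (hG : DifferentiableOn ℝ G (Ioi 0))
    (hG' : ∀ x > 0, 0 ≤ deriv G x) (hφ : DifferentiableOn ℝ φ (Ioi 0))
    (hφ' : DifferentiableOn ℝ (deriv φ) (Ioi 0))
    (hφ'' : DifferentiableOn ℝ (deriv (deriv φ)) (Ioi 0)) (hpos : ∀ x > 0, 0 < φ x)
    (hdecr : ∀ x > 0, deriv φ x < 0)
    (hODE : ∀ x > 0, σ ^ 2 / 2 * deriv (deriv φ) x + (μ - G x) * deriv φ x - q * φ x = 0) :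
    ∀ x > 0, 0 < deriv (deriv φ) x := by
  have hdiff : ∀ {f : ℝ → ℝ}, DifferentiableOn ℝ f (Ioi 0) → ∀ x > 0, DifferentiableAt ℝ f x :=
    fun hf x hx => hf.differentiableAt (Ioi_mem_nhds hx)
  intro a ha
  by_contra! h
  have hsub : Ici a ⊆ Ioi 0 := Ici_subset_Ioi.2 ha
  have hconcave : ∀ x ∈ Ioi a, deriv (deriv φ) x < 0 := by
    intro x hx
    refine neg_pos.1 (pos_of_nonneg_of_deriv_pos_of_eq_zero (g := fun y => -deriv (deriv φ) y) hx
      (hφ''.continuousOn.mono (Icc_subset_Ici_self.trans hsub)).neg ?_ (neg_nonneg.2 h))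
    intro c hc hzero
    have hc0 : 0 < c := hsub hc.1
    have h3 := deriv_deriv_deriv_eq_of_ode hc0 (hdiff hG c hc0) (hdiff hφ c hc0)
      (hdiff hφ' c hc0) (hdiff hφ'' c hc0) hODE
    rw [neg_eq_zero.1 hzero, mul_zero, add_zero] at h3
    have hneg : σ ^ 2 / 2 * deriv (deriv (deriv φ)) c < 0 :=
      h3 ▸ mul_neg_of_pos_of_neg (by linarith [hG' c hc0]) (hdecr c hc0)
    rw [deriv.fun_neg, neg_pos]
    exact neg_of_mul_neg_right hneg (by positivity)
  have hanti : AntitoneOn (deriv φ) (Ici a) :=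
    antitoneOn_of_deriv_nonpos (convex_Ici a) (hφ'.continuousOn.mono hsub)
      (by rw [interior_Ici]; exact hφ'.mono (Ioi_subset_Ioi ha.le))
      (by rw [interior_Ici]; exact fun x hx => (hconcave x hx).le)
  obtain ⟨x, hx, hφx⟩ := exists_lt_zero_of_deriv_le_neg (hdecr a ha)
    (hφ.continuousOn.mono hsub) (hφ.mono (Ioi_subset_Ioi ha.le))
    (fun x hx => hanti self_mem_Ici (mem_Ici.2 (le_of_lt hx)) (le_of_lt hx))
  exact hφx.not_gt (hpos x (hsub hx))

end ODE

theorem stmt_3_general (μ σ q : ℝ) (hq : 0 < q)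
    (G φ : ℝ → ℝ)
    (hGmono : MonotoneOn G (Set.Ici 0))
    (hGdiff : DifferentiableOn ℝ G (Set.Ici 0))
    (hφC : ContDiffOn ℝ 3 φ (Set.Ici 0))
    (hφpos : ∀ x ≥ (0:ℝ), 0 < φ x)
    (hφlim : Filter.Tendsto φ Filter.atTop (nhds 0))
    (hODE : ∀ x > (0:ℝ),
      σ ^ 2 / 2 * deriv (deriv φ) x + (μ - G x) * deriv φ x - q * φ x = 0) :
    StrictAntiOn φ (Set.Ioi 0) ∧ StrictConvexOn ℝ (Set.Ioi 0) φ ∧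
      ∀ x > (0:ℝ), deriv φ x < 0 ∧ 0 < deriv (deriv φ) x := by
  have hφ : ContDiffOn ℝ 3 φ (Ioi 0) := hφC.mono Ioi_subset_Ici_self
  have hφ' : ContDiffOn ℝ 2 (deriv φ) (Ioi 0) := hφ.deriv_of_isOpen isOpen_Ioi (by norm_num)
  have hφ'' : ContDiffOn ℝ 1 (deriv (deriv φ)) (Ioi 0) :=
    hφ'.deriv_of_isOpen isOpen_Ioi (by norm_num)
  have hpos : ∀ x > 0, 0 < φ x := fun x hx => hφpos x hx.le
  have hG' : ∀ x > 0, 0 ≤ deriv G x := fun x hx => by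
    rw [← derivWithin_of_mem_nhds (Ici_mem_nhds hx)]
    exact hGmono.derivWithin_nonneg
  have hdecr := deriv_neg_of_ode hq (hφ.differentiableOn (by norm_num))
    (hφ'.differentiableOn (by norm_num)) hpos hφlim hODE
  have hconvex := deriv_deriv_pos_of_ode hq (hGdiff.mono Ioi_subset_Ici_self) hG'
    (hφ.differentiableOn (by norm_num)) (hφ'.differentiableOn (by norm_num))
    (hφ''.differentiableOn (by norm_num)) hpos hdecr hODE
  refine ⟨strictAntiOn_of_deriv_neg (convex_Ioi 0) hφ.continuousOn ?_,
    strictConvexOn_of_deriv2_pos (convex_Ioi 0) hφ.continuousOn ?_,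
    fun x hx => ⟨hdecr x hx, hconvex x hx⟩⟩ <;> rw [interior_Ioi]
  exacts [hdecr, hconvex]

/-- If G is nondecreasing and differentiable on [0,∞), and φ is a
positive, C³ solution on [0,∞) of (σ²/2)φ'' + (μ − G)φ' − qφ = 0 on (0,∞) with
φ(x) → 0 as x → ∞, then φ is strictly decreasing and strictly convex on (0,∞):
φ'(x) < 0 and φ''(x) > 0 for all x > 0. -/
theorem stmt_3 (μ σ q : ℝ) (hμ : 0 < μ) (hσ : 0 < σ) (hq : 0 < q)
    (G φ : ℝ → ℝ)
    (hGmono : MonotoneOn G (Set.Ici 0))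
    (hGdiff : DifferentiableOn ℝ G (Set.Ici 0))
    (hφC : ContDiffOn ℝ 3 φ (Set.Ici 0))
    (hφpos : ∀ x ≥ (0:ℝ), 0 < φ x)
    (hφlim : Filter.Tendsto φ Filter.atTop (nhds 0))
    (hODE : ∀ x > (0:ℝ),
      σ ^ 2 / 2 * deriv (deriv φ) x + (μ - G x) * deriv φ x - q * φ x = 0) :
    StrictAntiOn φ (Set.Ioi 0) ∧ StrictConvexOn ℝ (Set.Ioi 0) φ ∧
      ∀ x > (0:ℝ), deriv φ x < 0 ∧ 0 < deriv (deriv φ) x :=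
  stmt_3_general μ σ q hq G φ hGmono hGdiff hφC hφpos hφlim hODE
end

section
/- Let F : ℝ → ℝ be monotone nondecreasing, let U : [0,∞) → ℝ and ℓ : [0,∞) → ℝ be continuous, and define Y : [0,∞) → ℝ by Y(t) = U(t) + ∫₀ᵗ (F(U(s)) − ℓ(s)) ds. If ℓ(t) ≤ F(Y(t)) for all t ≥ 0, then Y(t) ≥ U(t) for all t ≥ 0. -/
/-! The gap `D(t) = Y(t) - U(t) = ∫₀ᵗ (F(U(s)) - ℓ(s)) ds` starts at `0`, and wherever it is
negative we have `Y < U`, hence `ℓ ≤ F(Y) ≤ F(U)`, so its integrand is nonnegative there.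
If `D(t₀) < 0`, let `c` be the last time before `t₀` with `D(c) ≥ 0`: on `(c, t₀]` the integrand
is nonnegative, so `D(t₀) ≥ D(c) ≥ 0`, a contradiction. -/

open intervalIntegral MeasureTheory Set

theorem Monotone.integrableOn_comp_of_continuousOn {X : Type*} [TopologicalSpace X]
    [MeasurableSpace X] [OpensMeasurableSpace X] {μ : Measure X} [IsFiniteMeasureOnCompacts μ]
    {U : X → ℝ} {F : ℝ → ℝ} (hF : Monotone F) {K : Set X} (hK : IsCompact K)
    (hKm : MeasurableSet K) (hU : ContinuousOn U K) :
    IntegrableOn (fun x => F (U x)) K μ := by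
  have : IsFiniteMeasure (μ.restrict K) := isFiniteMeasure_restrict.mpr hK.measure_lt_top.ne
  obtain ⟨m, hm⟩ := (hK.image_of_continuousOn hU).bddBelow
  obtain ⟨M, hM⟩ := (hK.image_of_continuousOn hU).bddAbove
  refine Integrable.of_bound
    (hF.measurable.comp_aemeasurable (hU.aemeasurable hKm)).aestronglyMeasurable
    (max |F m| |F M|) ?_
  filter_upwards [ae_restrict_mem hKm] with x hx
  exact abs_le_max_abs_abs (hF (hm ⟨x, hx, rfl⟩)) (hF (hM ⟨x, hx, rfl⟩))

theorem intervalIntegral.integral_nonneg_of_nonneg_where_primitive_neg {f : ℝ → ℝ} {a b : ℝ}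
    (hab : a ≤ b) (hf : IntegrableOn f (Icc a b))
    (hneg : ∀ t ∈ Icc a b, ∫ s in a..t, f s < 0 → 0 ≤ f t) :
    0 ≤ ∫ s in a..b, f s := by
  set G : ℝ → ℝ := fun t => ∫ s in a..t, f s
  by_contra! hGb
  have hG : ContinuousOn G (Icc a b) := by
    simpa only [uIcc_of_le hab] using continuousOn_primitive_interval (μ := volume) (a := a)
      (b := b) (f := f) (by rwa [uIcc_of_le hab])
  set S := Icc a b ∩ G ⁻¹' Ici 0
  have hS : IsClosed S := hG.preimage_isClosed_of_isClosed isClosed_Icc isClosed_Ici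
  have haS : a ∈ S := ⟨left_mem_Icc.mpr hab, by simp [G]⟩
  have hSbdd : BddAbove S := ⟨b, fun s hs => hs.1.2⟩
  obtain ⟨⟨hac, hcb⟩, hGc⟩ : sSup S ∈ S := hS.csSup_mem ⟨a, haS⟩ hSbdd
  set c := sSup S
  have hfc : 0 ≤ ∫ s in c..b, f s := by
    rw [integral_of_le hcb]
    refine setIntegral_nonneg measurableSet_Ioc fun t ht => hneg t ⟨hac.trans ht.1.le, ht.2⟩ ?_
    by_contra! hGt
    exact (le_csSup hSbdd ⟨⟨hac.trans ht.1.le, ht.2⟩, hGt⟩).not_gt ht.1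
  have hsplit : G c + ∫ s in c..b, f s = G b :=
    integral_add_adjacent_intervals
      (hf.mono_set (uIcc_subset_Icc (left_mem_Icc.mpr hab) ⟨hac, hcb⟩)).intervalIntegrable
      (hf.mono_set (uIcc_subset_Icc ⟨hac, hcb⟩ (right_mem_Icc.mpr hab))).intervalIntegrable
  linarith [show (0 : ℝ) ≤ G c from hGc]

/-- pathwise comparison lemma. If F is nondecreasing, U and ℓ are
continuous on [0,∞), Y(t) = U(t) + ∫₀ᵗ (F(U(s)) − ℓ(s)) ds, and ℓ(t) ≤ F(Y(t))
for all t ≥ 0, then Y(t) ≥ U(t) for all t ≥ 0. -/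
theorem stmt_4 (F U ℓ Y : ℝ → ℝ)
    (hF : Monotone F)
    (hU : ContinuousOn U (Set.Ici 0))
    (hℓ : ContinuousOn ℓ (Set.Ici 0))
    (hY : ∀ t ≥ (0:ℝ), Y t = U t + ∫ s in (0:ℝ)..t, (F (U s) - ℓ s))
    (hbound : ∀ t ≥ (0:ℝ), ℓ t ≤ F (Y t)) :
    ∀ t ≥ (0:ℝ), U t ≤ Y t := by
  intro t₀ ht₀
  have hint : IntegrableOn (fun s => F (U s) - ℓ s) (Icc 0 t₀) :=
    (hF.integrableOn_comp_of_continuousOn isCompact_Icc measurableSet_Icc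
      (hU.mono Icc_subset_Ici_self)).sub
    ((hℓ.mono Icc_subset_Ici_self).integrableOn_compact isCompact_Icc)
  have hgap := integral_nonneg_of_nonneg_where_primitive_neg ht₀ hint fun t ht hneg => by
    have hYU : Y t ≤ U t := by linarith [hY t ht.1]
    linarith [hbound t ht.1, hF hYU]
  linarith [hY t₀ ht₀]
end

section
/- Let F : ℝ → ℝ be nondecreasing and concave, let q > 0, let w : [0,∞) → ℝ be continuous, let x, y ∈ ℝ, λ ∈ [0,1], and set z = λx + (1−λ)y. Suppose U_x, U_y, U_z : [0,∞) → ℝ are continuous functions satisfying U_a(t) = a + w(t) − ∫₀ᵗ F(U_a(s)) ds for all t ≥ 0, for a ∈ {x, y, z}. Then for every t ≥ 0, ∫₀ᵗ e^{−qs} F(U_z(s)) ds ≥ λ·∫₀ᵗ e^{−qs} F(U_x(s)) ds + (1−λ)·∫₀ᵗ e^{−qs} F(U_y(s)) ds. -/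
/-!
Let `g = F ∘ U_z - (λ F ∘ U_x + (1 - λ) F ∘ U_y)` and `G(t) = ∫₀ᵗ g`. Subtracting the integral
equations gives `λ U_x + (1 - λ) U_y = U_z + G`, since the noise `w` cancels. Wherever `G < 0`,
`U_z` lies above the convex combination, so concavity and monotonicity of `F` give `g ≥ 0`; hence
`G` can never become negative. Integrating by parts,
`∫₀ᵗ e^{-qs} g = e^{-qt} G(t) + q ∫₀ᵗ e^{-qs} G(s) ds ≥ 0`.
-/

open intervalIntegral MeasureTheory Set Real

theorem ConcaveOn.combo_le_of_monotone {F : ℝ → ℝ} (hF : ConcaveOn ℝ univ F) (hmono : Monotone F)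
    {a b x y z : ℝ} (ha : 0 ≤ a) (hb : 0 ≤ b) (hab : a + b = 1) (h : a * x + b * y ≤ z) :
    a * F x + b * F y ≤ F z :=
  (hF.2 (mem_univ x) (mem_univ y) ha hb hab).trans (hmono h)

theorem intervalIntegral.integral_sub_linear_combination {f g h : ℝ → ℝ} {a b c d : ℝ}
    (hf : IntervalIntegrable f volume a b) (hg : IntervalIntegrable g volume a b)
    (hh : IntervalIntegrable h volume a b) :
    ∫ x in a..b, (f x - (c * g x + d * h x)) =
      (∫ x in a..b, f x) - (c * (∫ x in a..b, g x) + d * ∫ x in a..b, h x) := by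
  rw [integral_sub hf ((hg.const_mul c).add (hh.const_mul d)),
    integral_add (hg.const_mul c) (hh.const_mul d), integral_const_mul, integral_const_mul]

theorem ContinuousOn.intervalIntegrable_of_Ici {f : ℝ → ℝ} {a b : ℝ}
    (hf : ContinuousOn f (Ici a)) (hab : a ≤ b) : IntervalIntegrable f volume a b :=
  (hf.mono Icc_subset_Ici_self).intervalIntegrable_of_Icc hab

theorem primitive_nonneg_of_nonneg_where_neg {g : ℝ → ℝ} {t : ℝ} (ht : 0 ≤ t)
    (hg : IntervalIntegrable g volume 0 t)
    (h : ∀ s ∈ Icc 0 t, ∫ r in 0..s, g r < 0 → 0 ≤ g s) :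
    0 ≤ ∫ r in 0..t, g r := by
  by_contra! hneg
  set G : ℝ → ℝ := fun s => ∫ r in 0..s, g r
  have hGc : ContinuousOn G (Icc 0 t) := by
    simpa [uIcc_of_le ht] using continuousOn_primitive_interval' hg left_mem_uIcc
  set S := Icc 0 t ∩ G ⁻¹' Ici 0
  have hS : IsCompact S :=
    isCompact_Icc.of_isClosed_subset (hGc.preimage_isClosed_of_isClosed isClosed_Icc isClosed_Ici)
      inter_subset_left
  have hS0 : (0 : ℝ) ∈ S := ⟨⟨le_rfl, ht⟩, by simp [G]⟩
  obtain ⟨⟨hs₀0, hs₀t⟩, hGs₀ : 0 ≤ G (sSup S)⟩ : sSup S ∈ S := hS.sSup_mem ⟨0, hS0⟩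
  -- past the last point where `G ≥ 0`, `G` is negative, so `g ≥ 0` and `G` cannot decrease
  have hneg_after : ∀ s ∈ Ioc (sSup S) t, G s < 0 := fun s hs => by
    by_contra! hGs
    exact (le_csSup hS.bddAbove ⟨⟨hs₀0.trans hs.1.le, hs.2⟩, hGs⟩).not_gt hs.1
  have hincr : 0 ≤ ∫ r in sSup S..t, g r := by
    rw [integral_of_le hs₀t]
    exact setIntegral_nonneg measurableSet_Ioc fun s hs =>
      h s ⟨hs₀0.trans hs.1.le, hs.2⟩ (hneg_after s hs)
  have hsplit : G t - G (sSup S) = ∫ r in sSup S..t, g r :=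
    integral_interval_sub_left hg
      (hg.mono_set (uIcc_subset_uIcc_left (Icc_subset_uIcc ⟨hs₀0, hs₀t⟩)))
  linarith

theorem integral_exp_mul_nonneg_of_primitive_nonneg {g : ℝ → ℝ} {q t : ℝ} (hq : 0 ≤ q)
    (ht : 0 ≤ t)
    (hg : ContinuousOn g (Icc 0 t)) (hG : ∀ s ∈ Icc 0 t, 0 ≤ ∫ r in 0..s, g r) :
    0 ≤ ∫ s in 0..t, exp (-q * s) * g s := by
  have hgi : IntervalIntegrable g volume 0 t := hg.intervalIntegrable_of_Icc ht
  have hGc : ContinuousOn (fun s => ∫ r in 0..s, g r) (uIcc 0 t) :=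
    continuousOn_primitive_interval' hgi left_mem_uIcc
  have hexp : ∀ s, HasDerivAt (fun s => exp (-q * s)) (-q * exp (-q * s)) s := fun s => by
    simpa [mul_comm] using ((hasDerivAt_id s).const_mul (-q)).exp
  have hGd : ∀ s ∈ Ioo (min 0 t) (max 0 t), HasDerivAt (fun s => ∫ r in 0..s, g r) (g s) s := by
    rw [min_eq_left ht, max_eq_right ht]
    intro s hs
    exact integral_hasDerivAt_right
      (hgi.mono_set (uIcc_subset_uIcc_left (Icc_subset_uIcc ⟨hs.1.le, hs.2.le⟩)))
      ((hg.mono Ioo_subset_Icc_self).stronglyMeasurableAtFilter isOpen_Ioo s hs)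
      (hg.continuousAt (Icc_mem_nhds hs.1 hs.2))
  rw [integral_mul_deriv_eq_deriv_mul_of_hasDerivAt (by fun_prop) hGc (fun s _ => hexp s) hGd
    ((by fun_prop : Continuous fun s => -q * exp (-q * s)).intervalIntegrable 0 t) hgi,
    integral_same]
  have hboundary : 0 ≤ exp (-q * t) * ∫ r in 0..t, g r :=
    mul_nonneg (exp_nonneg _) (hG t ⟨ht, le_rfl⟩)
  have hbulk : ∫ s in 0..t, -q * exp (-q * s) * ∫ r in 0..s, g r ≤ 0 := by
    rw [← neg_nonneg, ← intervalIntegral.integral_neg]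
    exact integral_nonneg ht fun s hs => neg_nonneg.2 <| mul_nonpos_of_nonpos_of_nonneg
      (mul_nonpos_of_nonpos_of_nonneg (neg_nonpos.2 hq) (exp_nonneg _)) (hG s hs)
  linarith

theorem stmt_5_general (F : ℝ → ℝ) (hFmono : Monotone F) (hFconc : ConcaveOn ℝ Set.univ F)
    (q : ℝ) (hq : 0 < q)
    (w : ℝ → ℝ)
    (x y l : ℝ) (hl : l ∈ Set.Icc (0:ℝ) 1) (z : ℝ) (hz : z = l * x + (1 - l) * y)
    (Ux Uy Uz : ℝ → ℝ)
    (hUxc : ContinuousOn Ux (Set.Ici 0)) (hUyc : ContinuousOn Uy (Set.Ici 0))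
    (hUzc : ContinuousOn Uz (Set.Ici 0))
    (hUx : ∀ t ≥ (0:ℝ), Ux t = x + w t - ∫ s in (0:ℝ)..t, F (Ux s))
    (hUy : ∀ t ≥ (0:ℝ), Uy t = y + w t - ∫ s in (0:ℝ)..t, F (Uy s))
    (hUz : ∀ t ≥ (0:ℝ), Uz t = z + w t - ∫ s in (0:ℝ)..t, F (Uz s)) :
    ∀ t ≥ (0:ℝ),
      l * (∫ s in (0:ℝ)..t, Real.exp (-q * s) * F (Ux s)) +
          (1 - l) * (∫ s in (0:ℝ)..t, Real.exp (-q * s) * F (Uy s)) ≤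
        ∫ s in (0:ℝ)..t, Real.exp (-q * s) * F (Uz s) := by
  intro t ht
  have hFc : Continuous F := hFconc.locallyLipschitz.continuous
  have hFx : ContinuousOn (fun s => F (Ux s)) (Ici 0) := hFc.comp_continuousOn hUxc
  have hFy : ContinuousOn (fun s => F (Uy s)) (Ici 0) := hFc.comp_continuousOn hUyc
  have hFz : ContinuousOn (fun s => F (Uz s)) (Ici 0) := hFc.comp_continuousOn hUzc
  set g : ℝ → ℝ := fun s => F (Uz s) - (l * F (Ux s) + (1 - l) * F (Uy s))
  have hgc : ContinuousOn g (Ici 0) := by fun_prop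
  have hcomb : ∀ s ≥ (0 : ℝ), l * Ux s + (1 - l) * Uy s = Uz s + ∫ r in 0..s, g r := by
    intro s hs
    have hGs : ∫ r in 0..s, g r = (∫ r in 0..s, F (Uz r)) -
        (l * (∫ r in 0..s, F (Ux r)) + (1 - l) * ∫ r in 0..s, F (Uy r)) :=
      integral_sub_linear_combination (hFz.intervalIntegrable_of_Ici hs)
        (hFx.intervalIntegrable_of_Ici hs) (hFy.intervalIntegrable_of_Ici hs)
    rw [hGs, hUx s hs, hUy s hs, hUz s hs, hz]
    ring
  have hG : ∀ s ∈ Icc 0 t, 0 ≤ ∫ r in 0..s, g r := fun s hs =>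
    primitive_nonneg_of_nonneg_where_neg hs.1 (hgc.intervalIntegrable_of_Ici hs.1) fun r hr hneg =>
      sub_nonneg.2 <| hFconc.combo_le_of_monotone hFmono hl.1 (sub_nonneg.2 hl.2)
        (add_sub_cancel l 1) (by linarith [hcomb r hr.1])
  have key :=
    integral_exp_mul_nonneg_of_primitive_nonneg hq.le ht (hgc.mono Icc_subset_Ici_self) hG
  have hsplit : ∫ s in 0..t, exp (-q * s) * g s =
      (∫ s in 0..t, exp (-q * s) * F (Uz s)) - (l * (∫ s in 0..t, exp (-q * s) * F (Ux s)) +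
        (1 - l) * ∫ s in 0..t, exp (-q * s) * F (Uy s)) := by
    have hexp : ContinuousOn (fun s => exp (-q * s)) (uIcc 0 t) := by fun_prop
    rw [← integral_sub_linear_combination ((hFz.intervalIntegrable_of_Ici ht).continuousOn_mul hexp)
      ((hFx.intervalIntegrable_of_Ici ht).continuousOn_mul hexp)
      ((hFy.intervalIntegrable_of_Ici ht).continuousOn_mul hexp)]
    congr 1 with s
    ring
  linarith

/-- pathwise concavity inequality. If F is nondecreasing and concave,
q > 0, and U_x, U_y, U_z are continuous solutions of U_a(t) = a + w(t) − ∫₀ᵗ F(U_a(s)) ds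
for a = x, y, z := λx + (1−λ)y driven by a common continuous path w, then for all t ≥ 0,
∫₀ᵗ e^{−qs} F(U_z(s)) ds ≥ λ·∫₀ᵗ e^{−qs} F(U_x(s)) ds + (1−λ)·∫₀ᵗ e^{−qs} F(U_y(s)) ds. -/
theorem stmt_5 (F : ℝ → ℝ) (hFmono : Monotone F) (hFconc : ConcaveOn ℝ Set.univ F)
    (q : ℝ) (hq : 0 < q)
    (w : ℝ → ℝ) (hw : ContinuousOn w (Set.Ici 0))
    (x y l : ℝ) (hl : l ∈ Set.Icc (0:ℝ) 1) (z : ℝ) (hz : z = l * x + (1 - l) * y)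
    (Ux Uy Uz : ℝ → ℝ)
    (hUxc : ContinuousOn Ux (Set.Ici 0)) (hUyc : ContinuousOn Uy (Set.Ici 0))
    (hUzc : ContinuousOn Uz (Set.Ici 0))
    (hUx : ∀ t ≥ (0:ℝ), Ux t = x + w t - ∫ s in (0:ℝ)..t, F (Ux s))
    (hUy : ∀ t ≥ (0:ℝ), Uy t = y + w t - ∫ s in (0:ℝ)..t, F (Uy s))
    (hUz : ∀ t ≥ (0:ℝ), Uz t = z + w t - ∫ s in (0:ℝ)..t, F (Uz s)) :
    ∀ t ≥ (0:ℝ),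
      l * (∫ s in (0:ℝ)..t, Real.exp (-q * s) * F (Ux s)) +
          (1 - l) * (∫ s in (0:ℝ)..t, Real.exp (-q * s) * F (Uy s)) ≤
        ∫ s in (0:ℝ)..t, Real.exp (-q * s) * F (Uz s) :=
  stmt_5_general F hFmono hFconc q hq w x y l hl z hz Ux Uy Uz hUxc hUyc hUzc hUx hUy hUz
end

section
/- Let F : ℝ → ℝ be monotone nondecreasing, let q > 0, h ≥ 0, x ∈ ℝ, let w : [0,∞) → ℝ be continuous, and suppose U, V : [0,∞) → ℝ are continuous functions satisfying U(t) = x + w(t) − ∫₀ᵗ F(U(s)) ds and V(t) = x + h + w(t) − ∫₀ᵗ F(V(s)) ds for all t ≥ 0. Then for every t ≥ 0, 0 ≤ ∫₀ᵗ e^{−qs}(F(V(s)) − F(U(s))) ds ≤ h. -/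
/-!
The difference `D = V - U` satisfies `D t = h - ∫₀ᵗ (F V - F U)`. Wherever `D < 0` the integrand
is `≤ 0` by monotonicity of `F`, so `D` cannot decrease while negative; since `D 0 = h ≥ 0`, this
gives `U ≤ V`. Hence `0 ≤ F V - F U`, and as `0 < e^{-qs} ≤ 1`,
`0 ≤ ∫₀ᵗ e^{-qs} (F V - F U) ≤ ∫₀ᵗ (F V - F U) = h - D t ≤ h`.
-/

open intervalIntegral MeasureTheory Set

theorem Monotone.intervalIntegrable_comp {F U : ℝ → ℝ} {a b : ℝ} (hF : Monotone F)
    (hU : ContinuousOn U (uIcc a b)) :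
    IntervalIntegrable (fun s => F (U s)) volume a b := by
  have hK : IsCompact (U '' uIcc a b) := isCompact_uIcc.image_of_continuousOn hU
  obtain ⟨m, hm⟩ := hK.bddBelow
  obtain ⟨M, hM⟩ := hK.bddAbove
  have hmeas : AEStronglyMeasurable (fun s => F (U s)) (volume.restrict (uIcc a b)) :=
    (hF.measurable.comp_aemeasurable
      (hU.aemeasurable measurableSet_uIcc)).aestronglyMeasurable
  refine IntegrableOn.intervalIntegrable <|
    IntegrableOn.of_bound measure_Icc_lt_top hmeas (max |F m| |F M|) ?_
  filter_upwards [ae_restrict_mem measurableSet_uIcc] with s hs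
  exact abs_le_max_abs_abs (hF (hm (mem_image_of_mem U hs))) (hF (hM (mem_image_of_mem U hs)))

theorem Monotone.intervalIntegrable_comp_of_continuousOn_Ici {F U : ℝ → ℝ} {a b : ℝ}
    (hF : Monotone F) (hU : ContinuousOn U (Ici a)) (hab : a ≤ b) :
    IntervalIntegrable (fun s => F (U s)) volume a b :=
  hF.intervalIntegrable_comp (hU.mono (by rw [uIcc_of_le hab]; exact Icc_subset_Ici_self))

theorem nonneg_of_eq_add_integral {D g : ℝ → ℝ} {a t : ℝ} (hat : a ≤ t)
    (hDc : ContinuousOn D (Icc a t)) (hg : IntervalIntegrable g volume a t)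
    (hD : ∀ s ∈ Icc a t, D s = D a + ∫ u in a..s, g u)
    (hgD : ∀ s ∈ Icc a t, D s < 0 → 0 ≤ g s) (ha : 0 ≤ D a) : 0 ≤ D t := by
  by_contra! hDt
  set S := Icc a t ∩ D ⁻¹' Ici 0
  have haS : a ∈ S := ⟨left_mem_Icc.2 hat, ha⟩
  have hSbdd : BddAbove S := bddAbove_Icc.mono inter_subset_left
  have hτS : sSup S ∈ S :=
    (hDc.preimage_isClosed_of_isClosed isClosed_Icc isClosed_Ici).csSup_mem ⟨a, haS⟩ hSbdd
  set τ := sSup S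
  obtain ⟨⟨haτ, hτt⟩, hDτ : 0 ≤ D τ⟩ := hτS
  have hneg : ∀ s ∈ Ioc τ t, D s < 0 := fun s hs => by
    by_contra! hs0
    exact (le_csSup hSbdd ⟨⟨haτ.trans hs.1.le, hs.2⟩, hs0⟩).not_gt hs.1
  have hτlt : τ < t := hτt.lt_of_ne fun he => (he ▸ hDτ).not_gt hDt
  have hgap : D t - D τ = ∫ u in τ..t, g u := by
    rw [hD t (right_mem_Icc.2 hat), hD τ ⟨haτ, hτt⟩, add_sub_add_left_eq_sub,
      integral_interval_sub_left hg
        (hg.mono_set (uIcc_subset_uIcc_left (Icc_subset_uIcc ⟨haτ, hτt⟩)))]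
  have hint : 0 ≤ ∫ u in τ..t, g u := by
    rw [integral_of_le hτlt.le]
    exact setIntegral_nonneg measurableSet_Ioc fun s hs =>
      hgD s ⟨haτ.trans hs.1.le, hs.2⟩ (hneg s hs)
  linarith

def SolvesIntegralEq (F w : ℝ → ℝ) (x : ℝ) (U : ℝ → ℝ) : Prop :=
  ∀ t ≥ (0:ℝ), U t = x + w t - ∫ s in (0:ℝ)..t, F (U s)

namespace SolvesIntegralEq

variable {F w U V : ℝ → ℝ} {x y : ℝ}

theorem sub_eq (hF : Monotone F) (hU : SolvesIntegralEq F w x U) (hV : SolvesIntegralEq F w y V)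
    (hUc : ContinuousOn U (Ici 0)) (hVc : ContinuousOn V (Ici 0)) {t : ℝ} (ht : 0 ≤ t) :
    V t - U t = (y - x) - ∫ s in (0:ℝ)..t, (F (V s) - F (U s)) := by
  rw [integral_sub (hF.intervalIntegrable_comp_of_continuousOn_Ici hVc ht)
    (hF.intervalIntegrable_comp_of_continuousOn_Ici hUc ht), hU t ht, hV t ht]
  ring

theorem le_of_le (hF : Monotone F) (hU : SolvesIntegralEq F w x U)
    (hV : SolvesIntegralEq F w y V) (hUc : ContinuousOn U (Ici 0))
    (hVc : ContinuousOn V (Ici 0)) (hxy : x ≤ y) {t : ℝ} (ht : 0 ≤ t) : U t ≤ V t := by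
  have hD0 : V 0 - U 0 = y - x := by simpa using hU.sub_eq hF hV hUc hVc le_rfl
  have hD : ∀ s ∈ Icc 0 t, V s - U s = (V 0 - U 0) + ∫ u in (0:ℝ)..s, (F (U u) - F (V u)) :=
    fun s hs => by
      rw [hU.sub_eq hF hV hUc hVc hs.1, hD0, sub_eq_add_neg, ← intervalIntegral.integral_neg]
      simp only [neg_sub]
  have hDt : 0 ≤ V t - U t :=
    nonneg_of_eq_add_integral (D := fun s => V s - U s) ht
      ((hVc.sub hUc).mono Icc_subset_Ici_self)
      ((hF.intervalIntegrable_comp_of_continuousOn_Ici hUc ht).sub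
        (hF.intervalIntegrable_comp_of_continuousOn_Ici hVc ht))
      hD (fun s _ hs => sub_nonneg.2 (hF (sub_neg.1 hs).le)) (hD0 ▸ sub_nonneg.2 hxy)
  exact sub_nonneg.1 hDt

end SolvesIntegralEq

theorem stmt_6_general (F : ℝ → ℝ) (hF : Monotone F)
    (q h x : ℝ) (hq : 0 < q) (hh : 0 ≤ h)
    (w U V : ℝ → ℝ)
    (hUc : ContinuousOn U (Set.Ici 0)) (hVc : ContinuousOn V (Set.Ici 0))
    (hU : ∀ t ≥ (0:ℝ), U t = x + w t - ∫ s in (0:ℝ)..t, F (U s))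
    (hV : ∀ t ≥ (0:ℝ), V t = x + h + w t - ∫ s in (0:ℝ)..t, F (V s)) :
    ∀ t ≥ (0:ℝ),
      0 ≤ (∫ s in (0:ℝ)..t, Real.exp (-q * s) * (F (V s) - F (U s))) ∧
        (∫ s in (0:ℝ)..t, Real.exp (-q * s) * (F (V s) - F (U s))) ≤ h := by
  intro t ht
  have hU' : SolvesIntegralEq F w x U := hU
  have hV' : SolvesIntegralEq F w (x + h) V := hV
  have hUV : ∀ s ≥ (0:ℝ), U s ≤ V s := fun s hs =>
    hU'.le_of_le hF hV' hUc hVc (le_add_of_nonneg_right hh) hs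
  have hg : IntervalIntegrable (fun s => F (V s) - F (U s)) volume 0 t :=
    (hF.intervalIntegrable_comp_of_continuousOn_Ici hVc ht).sub
      (hF.intervalIntegrable_comp_of_continuousOn_Ici hUc ht)
  have hg0 : ∀ s ∈ Icc 0 t, 0 ≤ F (V s) - F (U s) := fun s hs => sub_nonneg.2 (hF (hUV s hs.1))
  refine ⟨integral_nonneg ht fun s hs => mul_nonneg (Real.exp_pos _).le (hg0 s hs), ?_⟩
  calc (∫ s in (0:ℝ)..t, Real.exp (-q * s) * (F (V s) - F (U s)))
      ≤ ∫ s in (0:ℝ)..t, (F (V s) - F (U s)) :=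
        integral_mono_on ht (hg.continuousOn_mul (by fun_prop)) hg fun s hs =>
          mul_le_of_le_one_left (hg0 s hs) (Real.exp_le_one_iff.2 (by nlinarith [hs.1]))
    _ = h - (V t - U t) := by rw [hU'.sub_eq hF hV' hUc hVc ht]; ring
    _ ≤ h := sub_le_self h (sub_nonneg.2 (hUV t ht))

/-- pathwise estimate behind I_F' ≤ 1. If F is nondecreasing, q > 0,
h ≥ 0, and U, V are continuous solutions of the same integral equation driven by a
common continuous path w, started from x and x + h respectively, then for all t ≥ 0,
0 ≤ ∫₀ᵗ e^{−qs}(F(V(s)) − F(U(s))) ds ≤ h. -/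
theorem stmt_6 (F : ℝ → ℝ) (hF : Monotone F)
    (q h x : ℝ) (hq : 0 < q) (hh : 0 ≤ h)
    (w U V : ℝ → ℝ) (hw : ContinuousOn w (Set.Ici 0))
    (hUc : ContinuousOn U (Set.Ici 0)) (hVc : ContinuousOn V (Set.Ici 0))
    (hU : ∀ t ≥ (0:ℝ), U t = x + w t - ∫ s in (0:ℝ)..t, F (U s))
    (hV : ∀ t ≥ (0:ℝ), V t = x + h + w t - ∫ s in (0:ℝ)..t, F (V s)) :
    ∀ t ≥ (0:ℝ),
      0 ≤ (∫ s in (0:ℝ)..t, Real.exp (-q * s) * (F (V s) - F (U s))) ∧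
        (∫ s in (0:ℝ)..t, Real.exp (-q * s) * (F (V s) - F (U s))) ≤ h :=
  stmt_6_general F hF q h x hq hh w U V hUc hVc hU hV
end

section
/- Suppose I'(0) − I(0)·φ'(0) > 1. Then there exists b* ∈ (0, b̂] such that I(b*) − I'(b*)·φ(b*)/φ'(b*) = ψ(b*)/ψ'(b*) − φ(b*)/φ'(b*). -/
/-!
Put `g = I + (1 - I') φ / φ' - ψ / ψ'`; its zeros are exactly the solutions of the barrier
equation. Since `ψ = c (exp (r₊ x) - exp (r₋ x))` with `r± = (±Δ - μ) / σ²` the roots of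
`σ²/2 r² + μ r - q`, the function `ψ` solves `σ²/2 ψ'' + μ ψ' - q ψ = 0` and `ψ' > 0`; at the
inflection point `b̂` this gives `ψ / ψ' = μ / q`. Eliminating `F` between the equations of `I`
and `φ` bounds `I + (1 - I') φ / φ'` by `μ / q`, so `g b̂ ≤ 0`, while `g 0 > 0` is the hypothesis
`I'(0) - I(0) φ'(0) > 1`. The intermediate value theorem gives the zero.
-/

open Real Set

lemma exp_mul_mul_sinh_mul (a b x : ℝ) :
    exp (a * x) * sinh (b * x) = (exp ((a + b) * x) - exp ((a - b) * x)) / 2 := by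
  rw [sinh_eq, mul_div_assoc', mul_sub, ← exp_add, ← exp_add, ← neg_mul]
  ring_nf

lemma hasDerivAt_mul_exp_add_mul_exp (α β r s x : ℝ) :
    HasDerivAt (fun x => α * exp (r * x) + β * exp (s * x))
      (α * r * exp (r * x) + β * s * exp (s * x)) x := by
  have hr := ((hasDerivAt_id' x).const_mul r).exp.const_mul α
  have hs := ((hasDerivAt_id' x).const_mul s).exp.const_mul β
  exact (hr.add hs).congr_deriv (by ring)

lemma deriv_mul_exp_add_mul_exp (α β r s : ℝ) :
    deriv (fun x => α * exp (r * x) + β * exp (s * x)) =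
      fun x => α * r * exp (r * x) + β * s * exp (s * x) :=
  funext fun x => (hasDerivAt_mul_exp_add_mul_exp α β r s x).deriv

lemma mul_exp_add_mul_exp_ode {a c d r s : ℝ} (hr : a * r ^ 2 + c * r - d = 0)
    (hs : a * s ^ 2 + c * s - d = 0) (α β x : ℝ) :
    a * deriv (deriv fun x => α * exp (r * x) + β * exp (s * x)) x
      + c * deriv (fun x => α * exp (r * x) + β * exp (s * x)) x
      - d * (α * exp (r * x) + β * exp (s * x)) = 0 := by
  simp only [deriv_mul_exp_add_mul_exp]
  linear_combination (α * exp (r * x)) * hr + (β * exp (s * x)) * hs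

lemma abs_lt_sqrt_sq_add {μ c : ℝ} (hc : 0 < c) : |μ| < √(μ ^ 2 + c) := by
  rw [← sqrt_sq_eq_abs]
  exact sqrt_lt_sqrt (sq_nonneg μ) (lt_add_of_pos_right _ hc)

section Psi

variable {μ σ q Δ : ℝ} {ψ : ℝ → ℝ}

lemma psi_eq_mul_exp_add_mul_exp
    (hψ : ∀ x, ψ x = σ ^ 2 / Δ * exp (-(μ / σ ^ 2) * x) * sinh (Δ * x / σ ^ 2)) :
    ψ = fun x => σ ^ 2 / (2 * Δ) * exp ((Δ - μ) / σ ^ 2 * x)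
      + -(σ ^ 2 / (2 * Δ)) * exp ((-Δ - μ) / σ ^ 2 * x) := by
  funext x
  rw [hψ, mul_assoc, show Δ * x / σ ^ 2 = Δ / σ ^ 2 * x by ring, exp_mul_mul_sinh_mul,
    show -(μ / σ ^ 2) + Δ / σ ^ 2 = (Δ - μ) / σ ^ 2 by ring,
    show -(μ / σ ^ 2) - Δ / σ ^ 2 = (-Δ - μ) / σ ^ 2 by ring]
  ring

lemma char_poly_sub_div_eq_zero (hσ : σ ≠ 0) (hΔ : Δ ^ 2 = μ ^ 2 + 2 * q * σ ^ 2) :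
    σ ^ 2 / 2 * ((Δ - μ) / σ ^ 2) ^ 2 + μ * ((Δ - μ) / σ ^ 2) - q = 0 := by
  field_simp
  linear_combination hΔ

lemma psi_ode (hσ : σ ≠ 0) (hΔ : Δ ^ 2 = μ ^ 2 + 2 * q * σ ^ 2)
    (hψ : ∀ x, ψ x = σ ^ 2 / Δ * exp (-(μ / σ ^ 2) * x) * sinh (Δ * x / σ ^ 2)) (x : ℝ) :
    σ ^ 2 / 2 * deriv (deriv ψ) x + μ * deriv ψ x - q * ψ x = 0 := by
  rw [psi_eq_mul_exp_add_mul_exp hψ]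
  exact mul_exp_add_mul_exp_ode (char_poly_sub_div_eq_zero hσ hΔ)
    (char_poly_sub_div_eq_zero hσ (by rwa [neg_sq])) _ _ x

lemma deriv_psi_pos (hσ : σ ≠ 0) (hμΔ : |μ| < Δ)
    (hψ : ∀ x, ψ x = σ ^ 2 / Δ * exp (-(μ / σ ^ 2) * x) * sinh (Δ * x / σ ^ 2)) (x : ℝ) :
    0 < deriv ψ x := by
  rw [psi_eq_mul_exp_add_mul_exp hψ, deriv_mul_exp_add_mul_exp]
  have hσ2 : 0 < σ ^ 2 := by positivity
  have hΔ : 0 < Δ := (abs_nonneg μ).trans_lt hμΔ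
  have hr : 0 < (Δ - μ) / σ ^ 2 := div_pos (by linarith [le_abs_self μ]) hσ2
  have hs : (-Δ - μ) / σ ^ 2 < 0 := div_neg_of_neg_of_pos (by linarith [neg_abs_le μ]) hσ2
  have hc : 0 < σ ^ 2 / (2 * Δ) := by positivity
  exact add_pos (mul_pos (mul_pos hc hr) (exp_pos _))
    (mul_pos (mul_pos_of_neg_of_neg (neg_neg_of_pos hc) hs) (exp_pos _))

lemma contDiff_psi {n : WithTop ℕ∞}
    (hψ : ∀ x, ψ x = σ ^ 2 / Δ * exp (-(μ / σ ^ 2) * x) * sinh (Δ * x / σ ^ 2)) :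
    ContDiff ℝ n ψ := by
  rw [psi_eq_mul_exp_add_mul_exp hψ]
  fun_prop

end Psi

noncomputable def barrierGap (I φ ψ : ℝ → ℝ) (x : ℝ) : ℝ :=
  I x + (1 - deriv I x) * (φ x / deriv φ x) - ψ x / deriv ψ x

lemma barrierGap_eq_zero_iff {I φ ψ : ℝ → ℝ} {x : ℝ} :
    barrierGap I φ ψ x = 0 ↔
      I x - deriv I x * φ x / deriv φ x = ψ x / deriv ψ x - φ x / deriv φ x := by
  unfold barrierGap
  constructor <;> intro h <;> linear_combination h

lemma continuousOn_barrierGap {I φ ψ : ℝ → ℝ} {s : Set ℝ} (hI : ContDiff ℝ 1 I)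
    (hφ : ContDiff ℝ 1 φ) (hψ : ContDiff ℝ 1 ψ) (hφ' : ∀ x ∈ s, deriv φ x ≠ 0)
    (hψ' : ∀ x ∈ s, deriv ψ x ≠ 0) :
    ContinuousOn (barrierGap I φ ψ) s := by
  have hIc' := hI.continuous_deriv le_rfl
  have hφc' := hφ.continuous_deriv le_rfl
  have hψc' := hψ.continuous_deriv le_rfl
  exact ((hI.continuous.continuousOn.add ((continuous_const.sub hIc').continuousOn.mul
    (hφ.continuous.continuousOn.div hφc'.continuousOn hφ'))).sub
    (hψ.continuous.continuousOn.div hψc'.continuousOn hψ'))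

lemma barrierGap_pos_of_eq_zero {I φ ψ : ℝ → ℝ} {x : ℝ} (hφ : φ x = 1) (hψ : ψ x = 0)
    (hφ' : deriv φ x < 0) (h : 1 < deriv I x - I x * deriv φ x) :
    0 < barrierGap I φ ψ x := by
  rw [barrierGap, hφ, hψ, zero_div, sub_zero,
    show I x + (1 - deriv I x) * (1 / deriv φ x) = (I x * deriv φ x + (1 - deriv I x)) / deriv φ x
      by rw [add_div, mul_div_cancel_right₀ _ hφ'.ne, mul_one_div]]
  exact div_pos_of_neg_of_neg (by linarith) hφ'

lemma exists_mem_Ioc_eq_zero {f : ℝ → ℝ} {a b : ℝ} (hab : a ≤ b)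
    (hf : ContinuousOn f (Icc a b)) (ha : 0 < f a) (hb : f b ≤ 0) :
    ∃ c ∈ Ioc a b, f c = 0 := by
  obtain ⟨c, ⟨hac, hcb⟩, hc⟩ := intermediate_value_Icc' hab hf ⟨hb, ha.le⟩
  exact ⟨c, ⟨hac.lt_of_ne (by rintro rfl; exact ha.ne' hc), hcb⟩, hc⟩

section Comparison

variable {μ σ q : ℝ} {x : ℝ}

lemma div_deriv_eq_of_ode_of_deriv_deriv_eq_zero {ψ : ℝ → ℝ} (hq : q ≠ 0)
    (hψ' : deriv ψ x ≠ 0) (hψ : σ ^ 2 / 2 * deriv (deriv ψ) x + μ * deriv ψ x - q * ψ x = 0)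
    (hψ'' : deriv (deriv ψ) x = 0) :
    ψ x / deriv ψ x = μ / q := by
  rw [hψ''] at hψ
  rw [div_eq_div_iff hψ' hq]
  linarith

/-- Eliminating `F` between the two equations gives
`q (I + (1 - I') φ / φ') - μ = σ²/2 (I'' + (1 - I') φ'' / φ')`, which is `≤ 0`. -/
lemma add_one_sub_deriv_mul_div_deriv_le {F I φ : ℝ → ℝ} (hq : 0 < q)
    (hφ' : deriv φ x < 0) (hφ'' : 0 < deriv (deriv φ) x)
    (hI' : deriv I x ≤ 1) (hI'' : deriv (deriv I) x ≤ 0)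
    (hφ : σ ^ 2 / 2 * deriv (deriv φ) x + (μ - F x) * deriv φ x - q * φ x = 0)
    (hI : σ ^ 2 / 2 * deriv (deriv I) x + (μ - F x) * deriv I x - q * I x = -F x) :
    I x + (1 - deriv I x) * (φ x / deriv φ x) ≤ μ / q := by
  have key : q * (I x + (1 - deriv I x) * (φ x / deriv φ x)) - μ
      = σ ^ 2 / 2 * (deriv (deriv I) x + (1 - deriv I x) * (deriv (deriv φ) x / deriv φ x)) := by
    field_simp [hφ'.ne]
    linear_combination (-2 * deriv φ x) * hI - 2 * (1 - deriv I x) * hφ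
  have hconc : deriv (deriv I) x + (1 - deriv I x) * (deriv (deriv φ) x / deriv φ x) ≤ 0 :=
    add_nonpos hI'' (mul_nonpos_of_nonneg_of_nonpos (sub_nonneg.2 hI')
      (div_nonpos_of_nonneg_of_nonpos hφ''.le hφ'.le))
  have hrhs := mul_nonpos_of_nonneg_of_nonpos (by positivity : 0 ≤ σ ^ 2 / 2) hconc
  rw [le_div_iff₀' hq]
  linarith

end Comparison

theorem stmt_11_general (μ σ q : ℝ) (hσ : 0 < σ) (hq : 0 < q)
    (Δ : ℝ) (hΔ : Δ = Real.sqrt (μ ^ 2 + 2 * q * σ ^ 2))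
    (ψ : ℝ → ℝ)
    (hψ : ∀ x : ℝ, ψ x =
      σ ^ 2 / Δ * Real.exp (-(μ / σ ^ 2) * x) * Real.sinh (Δ * x / σ ^ 2))
    (bhat : ℝ) (hbhat_pos : 0 < bhat) (hbhat : deriv (deriv ψ) bhat = 0)
    (F φ I : ℝ → ℝ)
    (hφC : ContDiff ℝ 2 φ) (hφ0 : φ 0 = 1)
    (hφ' : ∀ x ≥ (0:ℝ), deriv φ x < 0)
    (hφ'' : ∀ x ≥ (0:ℝ), 0 < deriv (deriv φ) x)
    (hφODE : ∀ x > (0:ℝ),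
      σ ^ 2 / 2 * deriv (deriv φ) x + (μ - F x) * deriv φ x - q * φ x = 0)
    (hIC : ContDiff ℝ 2 I)
    (hIconc : ∀ x ≥ (0:ℝ), deriv (deriv I) x ≤ 0)
    (hI' : ∀ x ≥ (0:ℝ), 0 ≤ deriv I x ∧ deriv I x ≤ 1)
    (hIODE : ∀ x > (0:ℝ),
      σ ^ 2 / 2 * deriv (deriv I) x + (μ - F x) * deriv I x - q * I x = -F x)
    (hcond : 1 < deriv I 0 - I 0 * deriv φ 0) :
    ∃ b : ℝ, 0 < b ∧ b ≤ bhat ∧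
      I b - deriv I b * φ b / deriv φ b = ψ b / deriv ψ b - φ b / deriv φ b := by
  have h2qσ : 0 < 2 * q * σ ^ 2 := by positivity
  have hΔsq : Δ ^ 2 = μ ^ 2 + 2 * q * σ ^ 2 := by rw [hΔ, sq_sqrt (by positivity)]
  have hψ' : ∀ x, 0 < deriv ψ x := deriv_psi_pos hσ.ne' (hΔ ▸ abs_lt_sqrt_sq_add h2qσ) hψ
  have hgap_zero : 0 < barrierGap I φ ψ 0 :=
    barrierGap_pos_of_eq_zero hφ0 (by simp [hψ]) (hφ' 0 le_rfl) hcond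
  have hgap_bhat : barrierGap I φ ψ bhat ≤ 0 := by
    rw [barrierGap, div_deriv_eq_of_ode_of_deriv_deriv_eq_zero hq.ne' (hψ' bhat).ne'
      (psi_ode hσ.ne' hΔsq hψ bhat) hbhat, sub_nonpos]
    exact add_one_sub_deriv_mul_div_deriv_le hq (hφ' _ hbhat_pos.le) (hφ'' _ hbhat_pos.le)
      (hI' _ hbhat_pos.le).2 (hIconc _ hbhat_pos.le) (hφODE _ hbhat_pos) (hIODE _ hbhat_pos)
  have hgap_cont : ContinuousOn (barrierGap I φ ψ) (Icc 0 bhat) :=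
    continuousOn_barrierGap (hIC.of_le one_le_two) (hφC.of_le one_le_two) (contDiff_psi hψ)
      (fun x hx => (hφ' x hx.1).ne) (fun x _ => (hψ' x).ne')
  obtain ⟨b, ⟨hb0, hbb⟩, hb⟩ := exists_mem_Ioc_eq_zero hbhat_pos.le hgap_cont hgap_zero hgap_bhat
  exact ⟨b, hb0, hbb, barrierGap_eq_zero_iff.1 hb⟩

/-- existence of the optimal barrier. Under the stated hypotheses on
ψ (explicit), its inflection point b̂, the decreasing convex solution φ of the
homogeneous ODE and the concave solution I of the nonhomogeneous ODE with
0 ≤ I' ≤ 1, if I'(0) − I(0)·φ'(0) > 1 then there exists b* ∈ (0, b̂] with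
I(b*) − I'(b*)·φ(b*)/φ'(b*) = ψ(b*)/ψ'(b*) − φ(b*)/φ'(b*). -/
theorem stmt_11 (μ σ q : ℝ) (hμ : 0 < μ) (hσ : 0 < σ) (hq : 0 < q)
    (Δ : ℝ) (hΔ : Δ = Real.sqrt (μ ^ 2 + 2 * q * σ ^ 2))
    (ψ : ℝ → ℝ)
    (hψ : ∀ x : ℝ, ψ x =
      σ ^ 2 / Δ * Real.exp (-(μ / σ ^ 2) * x) * Real.sinh (Δ * x / σ ^ 2))
    (bhat : ℝ) (hbhat_pos : 0 < bhat) (hbhat : deriv (deriv ψ) bhat = 0)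
    (hbhat_uniq : ∀ b > (0:ℝ), deriv (deriv ψ) b = 0 → b = bhat)
    (F φ I : ℝ → ℝ)
    (hφC : ContDiff ℝ 2 φ) (hφ0 : φ 0 = 1)
    (hφ' : ∀ x ≥ (0:ℝ), deriv φ x < 0)
    (hφ'' : ∀ x ≥ (0:ℝ), 0 < deriv (deriv φ) x)
    (hφODE : ∀ x > (0:ℝ),
      σ ^ 2 / 2 * deriv (deriv φ) x + (μ - F x) * deriv φ x - q * φ x = 0)
    (hIC : ContDiff ℝ 2 I)
    (hIconc : ∀ x ≥ (0:ℝ), deriv (deriv I) x ≤ 0)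
    (hI' : ∀ x ≥ (0:ℝ), 0 ≤ deriv I x ∧ deriv I x ≤ 1)
    (hIODE : ∀ x > (0:ℝ),
      σ ^ 2 / 2 * deriv (deriv I) x + (μ - F x) * deriv I x - q * I x = -F x)
    (hcond : 1 < deriv I 0 - I 0 * deriv φ 0) :
    ∃ b : ℝ, 0 < b ∧ b ≤ bhat ∧
      I b - deriv I b * φ b / deriv φ b = ψ b / deriv ψ b - φ b / deriv φ b :=
  stmt_11_general μ σ q hσ hq Δ hΔ ψ hψ bhat hbhat_pos hbhat F φ I hφC hφ0 hφ' hφ'' hφODE hIC hIconc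
    hI' hIODE hcond
end

section
/- Suppose b* ∈ (0, b̂] satisfies I(b*) − I'(b*)·φ(b*)/φ'(b*) = ψ(b*)/ψ'(b*) − φ(b*)/φ'(b*), and define V : (0,∞) → ℝ by V(x) = ψ(x)/ψ'(b*) for 0 < x ≤ b* and V(x) = I(x) + ((1 − I'(b*))/φ'(b*))·φ(x) for x ≥ b*. Then V is twice continuously differentiable on (0,∞) and concave (V''(x) ≤ 0 for all x > 0). -/
/-!
On `(0, b*]` the function `V` is a positive multiple of `ψ`, and `ψ'' ≤ 0` on `[0, b̂]` since
`ψ''(0) < 0` and `ψ''` has no zero in `(0, b̂)`. On `[b*, ∞)` it is `I + κ φ` with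
`κ = (1 - I'(b*))/φ'(b*) ≤ 0`, which is concave since `I'' ≤ 0 < φ''`. The choice of `κ` and the
defining equation of `b*` match the values and slopes of the two pieces at `b*`; both pieces then
solve the same second order ODE at `b*`, so their second derivatives match too.
-/

open Real Set

section Pasting

variable {E : Type*} [NormedAddCommGroup E] [NormedSpace ℝ E] {f g : ℝ → E} {b : ℝ}

theorem contDiff_two_iff_deriv :
    ContDiff ℝ 2 f ↔
      Differentiable ℝ f ∧ Differentiable ℝ (deriv f) ∧ Continuous (deriv (deriv f)) := by
  rw [show (2 : WithTop ℕ∞) = 1 + 1 from rfl, contDiff_succ_iff_deriv, contDiff_one_iff_deriv]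
  simp

theorem deriv_add_const_smul (hf : Differentiable ℝ f) (hg : Differentiable ℝ g) (c : ℝ) :
    deriv (fun x => f x + c • g x) = fun x => deriv f x + c • deriv g x :=
  funext fun x => ((hf x).hasDerivAt.add ((hg x).hasDerivAt.const_smul c)).deriv

theorem hasDerivAt_ite_le (hf : Differentiable ℝ f) (hg : Differentiable ℝ g)
    (h0 : f b = g b) (h1 : deriv f b = deriv g b) (x : ℝ) :
    HasDerivAt (fun y => if y ≤ b then f y else g y)
      (if x ≤ b then deriv f x else deriv g x) x := by
  rcases lt_trichotomy x b with hx | rfl | hx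
  · rw [if_pos hx.le]
    refine (hf x).hasDerivAt.congr_of_eventuallyEq ?_
    filter_upwards [Iio_mem_nhds hx] with y hy using if_pos hy.le
  · rw [if_pos le_rfl]
    have hleft : HasDerivWithinAt (fun y => if y ≤ x then f y else g y) (deriv f x) (Iic x) x :=
      (hf x).hasDerivAt.hasDerivWithinAt.congr (fun y hy => if_pos hy) (if_pos le_rfl)
    have hright : HasDerivWithinAt (fun y => if y ≤ x then f y else g y) (deriv f x) (Ici x) x := by
      refine h1 ▸ (hg x).hasDerivAt.hasDerivWithinAt.congr (fun y hy => ?_) (by simp [h0])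
      rcases (mem_Ici.mp hy).eq_or_lt with rfl | hy
      · simp [h0]
      · exact if_neg (not_le.mpr hy)
    simpa [Iic_union_Ici] using hleft.union hright
  · rw [if_neg (not_le.mpr hx)]
    refine (hg x).hasDerivAt.congr_of_eventuallyEq ?_
    filter_upwards [Ioi_mem_nhds hx] with y hy using if_neg (not_le.mpr hy)

theorem deriv_ite_le (hf : Differentiable ℝ f) (hg : Differentiable ℝ g)
    (h0 : f b = g b) (h1 : deriv f b = deriv g b) :
    deriv (fun y => if y ≤ b then f y else g y) =
      fun x => if x ≤ b then deriv f x else deriv g x :=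
  funext fun x => (hasDerivAt_ite_le hf hg h0 h1 x).deriv

theorem contDiff_two_ite_le (hf : ContDiff ℝ 2 f) (hg : ContDiff ℝ 2 g) (h0 : f b = g b)
    (h1 : deriv f b = deriv g b) (h2 : deriv (deriv f) b = deriv (deriv g) b) :
    ContDiff ℝ 2 (fun y => if y ≤ b then f y else g y) ∧
      deriv (deriv fun y => if y ≤ b then f y else g y) =
        fun x => if x ≤ b then deriv (deriv f) x else deriv (deriv g) x := by
  rw [contDiff_two_iff_deriv] at hf hg ⊢
  obtain ⟨hf, hf', hf''⟩ := hf
  obtain ⟨hg, hg', hg''⟩ := hg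
  rw [deriv_ite_le hf hg h0 h1, deriv_ite_le hf' hg' h1 h2]
  refine ⟨⟨fun x => (hasDerivAt_ite_le hf hg h0 h1 x).differentiableAt,
    fun x => (hasDerivAt_ite_le hf' hg' h1 h2 x).differentiableAt, ?_⟩, rfl⟩
  exact hf''.if_le hg'' continuous_id continuous_const fun x hx => hx ▸ h2

end Pasting

section ExpHyp

variable (a b : ℝ)

/-- The solutions of `u'' + 2 a u' = (b² - a²) u`; the function `ψ` is
`expHyp (μ / σ²) (Δ / σ²) (σ² / Δ) 0`. -/
noncomputable def expHyp (p r x : ℝ) : ℝ := exp (-a * x) * (p * sinh (b * x) + r * cosh (b * x))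

theorem contDiff_expHyp {n : WithTop ℕ∞} (p r : ℝ) : ContDiff ℝ n (expHyp a b p r) := by
  unfold expHyp; fun_prop

theorem hasDerivAt_expHyp (p r x : ℝ) :
    HasDerivAt (expHyp a b p r) (expHyp a b (b * r - a * p) (b * p - a * r) x) x := by
  have hlin : HasDerivAt (fun y => b * y) b x := by simpa using (hasDerivAt_id x).const_mul b
  have hexp : HasDerivAt (fun y => exp (-a * y)) (exp (-a * x) * -a) x := by
    simpa using ((hasDerivAt_id x).const_mul (-a)).exp
  refine (hexp.mul ((((hasDerivAt_sinh _).comp x hlin).const_mul p).add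
    (((hasDerivAt_cosh _).comp x hlin).const_mul r))).congr_deriv ?_
  simp only [expHyp, Function.comp_apply, Pi.add_apply]
  ring

theorem deriv_expHyp (p r : ℝ) :
    deriv (expHyp a b p r) = expHyp a b (b * r - a * p) (b * p - a * r) :=
  funext fun x => (hasDerivAt_expHyp a b p r x).deriv

theorem deriv_deriv_expHyp_add (p r x : ℝ) :
    deriv (deriv (expHyp a b p r)) x + 2 * a * deriv (expHyp a b p r) x
      = (b ^ 2 - a ^ 2) * expHyp a b p r x := by
  simp only [deriv_expHyp, expHyp]; ring

theorem expHyp_pos {p r : ℝ} (hpr : |p| < r) (x : ℝ) : 0 < expHyp a b p r x := by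
  have hsinh : |sinh (b * x)| < cosh (b * x) := abs_lt.mpr
    ⟨by linarith [sinh_neg (b * x), cosh_neg (b * x), sinh_lt_cosh (-(b * x))], sinh_lt_cosh _⟩
  have : |p * sinh (b * x)| < r * cosh (b * x) := by
    rw [abs_mul]
    calc |p| * |sinh (b * x)| ≤ |p| * cosh (b * x) := by gcongr
      _ < r * cosh (b * x) := by gcongr
  exact mul_pos (exp_pos _) (by linarith [neg_abs_le (p * sinh (b * x))])

theorem expHyp_zero (p r : ℝ) : expHyp a b p r 0 = r := by simp [expHyp]

end ExpHyp

theorem deriv_expHyp_pos {a b c : ℝ} (hab : |a| < b) (hc : 0 < c) (x : ℝ) :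
    0 < deriv (expHyp a b c 0) x := by
  rw [deriv_expHyp]
  refine expHyp_pos a b ?_ x
  simpa [abs_mul, abs_of_pos hc] using mul_lt_mul_of_pos_right hab hc

theorem deriv_deriv_expHyp_zero_neg {a b c : ℝ} (ha : 0 < a) (hb : 0 < b) (hc : 0 < c) :
    deriv (deriv (expHyp a b c 0)) 0 < 0 := by
  rw [deriv_expHyp, deriv_expHyp, expHyp_zero]
  nlinarith [mul_pos (mul_pos ha hb) hc]

theorem expHyp_generator_eq_zero {μ σ q Δ : ℝ} (hσ : σ ≠ 0) (hΔ : Δ ^ 2 = μ ^ 2 + 2 * q * σ ^ 2)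
    (p r x : ℝ) :
    σ ^ 2 / 2 * deriv (deriv (expHyp (μ / σ ^ 2) (Δ / σ ^ 2) p r)) x
      + μ * deriv (expHyp (μ / σ ^ 2) (Δ / σ ^ 2) p r) x
      - q * expHyp (μ / σ ^ 2) (Δ / σ ^ 2) p r x = 0 := by
  have h := deriv_deriv_expHyp_add (μ / σ ^ 2) (Δ / σ ^ 2) p r x
  have hμ : σ ^ 2 / 2 * (2 * (μ / σ ^ 2)) = μ := by field_simp
  have hq : σ ^ 2 / 2 * ((Δ / σ ^ 2) ^ 2 - (μ / σ ^ 2) ^ 2) = q := by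
    field_simp; linear_combination hΔ
  linear_combination σ ^ 2 / 2 * h - deriv (expHyp (μ / σ ^ 2) (Δ / σ ^ 2) p r) x * hμ
    + expHyp (μ / σ ^ 2) (Δ / σ ^ 2) p r x * hq

theorem ContinuousOn.nonpos_of_ne_zero {f : ℝ → ℝ} {a b : ℝ} (hf : ContinuousOn f (Icc a b))
    (ha : f a < 0) (hne : ∀ z ∈ Ioo a b, f z ≠ 0) : ∀ x ∈ Icc a b, f x ≤ 0 := by
  intro x hx
  by_contra! hpos
  obtain ⟨z, hz, hfz⟩ := intermediate_value_Icc hx.1 (hf.mono (Icc_subset_Icc_right hx.2))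
    ⟨ha.le, hpos.le⟩
  have haz : a < z := hz.1.lt_of_ne (by rintro rfl; linarith)
  have hzx : z < x := hz.2.lt_of_ne (by rintro rfl; linarith)
  exact hne z ⟨haz, hzx.trans_le hx.2⟩ hfz

section SmoothFit

variable {ψ φ I : ℝ → ℝ} {b κ : ℝ}

/-- `ψ / ψ'(b)` has slope `1` at `b`, so at `b` it solves the same equation
`σ²/2 u'' + (μ - F) u' - q u = -F` as `I + κ φ`. -/
theorem deriv_deriv_div_eq_of_ode {σ μ q : ℝ} {F : ℝ → ℝ} (hσ : σ ≠ 0) (hψ' : deriv ψ b ≠ 0)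
    (hψ : σ ^ 2 / 2 * deriv (deriv ψ) b + μ * deriv ψ b - q * ψ b = 0)
    (hφ : σ ^ 2 / 2 * deriv (deriv φ) b + (μ - F b) * deriv φ b - q * φ b = 0)
    (hI : σ ^ 2 / 2 * deriv (deriv I) b + (μ - F b) * deriv I b - q * I b = -F b)
    (hvalue : ψ b / deriv ψ b = I b + κ * φ b) (hslope : deriv I b + κ * deriv φ b = 1) :
    deriv (deriv ψ) b / deriv ψ b = deriv (deriv I) b + κ * deriv (deriv φ) b := by
  rw [div_eq_iff hψ'] at hvalue ⊢
  have hσ2 : σ ^ 2 / 2 ≠ 0 := by positivity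
  refine mul_left_cancel₀ hσ2 ?_
  linear_combination hψ - deriv ψ b * hI - deriv ψ b * κ * hφ
    + deriv ψ b * (μ - F b) * hslope + q * hvalue

theorem contDiff_two_ite_div_add_mul (hψ : ContDiff ℝ 2 ψ) (hφ : ContDiff ℝ 2 φ)
    (hI : ContDiff ℝ 2 I) (hψ' : deriv ψ b ≠ 0) (hvalue : ψ b / deriv ψ b = I b + κ * φ b)
    (hslope : deriv I b + κ * deriv φ b = 1)
    (hcurv : deriv (deriv ψ) b / deriv ψ b = deriv (deriv I) b + κ * deriv (deriv φ) b) :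
    ContDiff ℝ 2 (fun x => if x ≤ b then ψ x / deriv ψ b else I x + κ * φ x) ∧
      deriv (deriv fun x => if x ≤ b then ψ x / deriv ψ b else I x + κ * φ x) =
        fun x => if x ≤ b then deriv (deriv ψ) x / deriv ψ b
          else deriv (deriv I) x + κ * deriv (deriv φ) x := by
  obtain ⟨hI₁, hI₂, -⟩ := contDiff_two_iff_deriv.mp hI
  obtain ⟨hφ₁, hφ₂, -⟩ := contDiff_two_iff_deriv.mp hφ
  have hf' (u : ℝ → ℝ) : deriv (fun x => u x / deriv ψ b) = fun x => deriv u x / deriv ψ b :=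
    funext fun _ => deriv_div_const _
  have hg' := deriv_add_const_smul hI₁ hφ₁ κ
  have hg'' := deriv_add_const_smul hI₂ hφ₂ κ
  simp only [smul_eq_mul] at hg' hg''
  obtain ⟨hC, hderiv⟩ := contDiff_two_ite_le (hψ.div_const (deriv ψ b))
    (hI.add (contDiff_const.mul hφ)) hvalue
    (by simp only [hf', hg', div_self hψ', hslope]) (by simp only [hf', hg', hg'', hcurv])
  exact ⟨hC, by simp only [hderiv, hf', hg', hg'']⟩

end SmoothFit

theorem stmt_12_general (μ σ q : ℝ) (hμ : 0 < μ) (hσ : 0 < σ) (hq : 0 < q)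
    (Δ : ℝ) (hΔ : Δ = Real.sqrt (μ ^ 2 + 2 * q * σ ^ 2))
    (ψ : ℝ → ℝ)
    (hψ : ∀ x : ℝ, ψ x =
      σ ^ 2 / Δ * Real.exp (-(μ / σ ^ 2) * x) * Real.sinh (Δ * x / σ ^ 2))
    (bhat : ℝ)
    (hbhat_uniq : ∀ b > (0:ℝ), deriv (deriv ψ) b = 0 → b = bhat)
    (F φ I : ℝ → ℝ)
    (hφC : ContDiff ℝ 2 φ)
    (hφ' : ∀ x ≥ (0:ℝ), deriv φ x < 0)
    (hφ'' : ∀ x ≥ (0:ℝ), 0 < deriv (deriv φ) x)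
    (hφODE : ∀ x > (0:ℝ),
      σ ^ 2 / 2 * deriv (deriv φ) x + (μ - F x) * deriv φ x - q * φ x = 0)
    (hIC : ContDiff ℝ 2 I)
    (hIconc : ∀ x ≥ (0:ℝ), deriv (deriv I) x ≤ 0)
    (hI' : ∀ x ≥ (0:ℝ), 0 ≤ deriv I x ∧ deriv I x ≤ 1)
    (hIODE : ∀ x > (0:ℝ),
      σ ^ 2 / 2 * deriv (deriv I) x + (μ - F x) * deriv I x - q * I x = -F x)
    (bs : ℝ) (hbs_pos : 0 < bs) (hbs_le : bs ≤ bhat)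
    (hbs : I bs - deriv I bs * φ bs / deriv φ bs
      = ψ bs / deriv ψ bs - φ bs / deriv φ bs)
    (V : ℝ → ℝ)
    (hV : ∀ x : ℝ, V x = if x ≤ bs then ψ x / deriv ψ bs
      else I x + (1 - deriv I bs) / deriv φ bs * φ x) :
    ContDiffOn ℝ 2 V (Set.Ioi 0) ∧ ∀ x > (0:ℝ), deriv (deriv V) x ≤ 0 := by
  have hΔ2 : Δ ^ 2 = μ ^ 2 + 2 * q * σ ^ 2 := hΔ ▸ sq_sqrt (by positivity)
  have hμΔ : μ < Δ := hΔ ▸ (lt_sqrt hμ.le).mpr (by nlinarith [mul_pos hq (pow_pos hσ 2)])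
  have hΔ_pos : 0 < Δ := hμ.trans hμΔ
  have hψ_eq : ψ = expHyp (μ / σ ^ 2) (Δ / σ ^ 2) (σ ^ 2 / Δ) 0 :=
    funext fun x => by rw [hψ, expHyp]; ring_nf
  have hψC : ContDiff ℝ 2 ψ := hψ_eq ▸ contDiff_expHyp _ _ _ _
  have hψ'_pos : ∀ x, 0 < deriv ψ x := hψ_eq ▸ deriv_expHyp_pos
    (by rw [abs_of_pos (by positivity)]; gcongr) (by positivity)
  have hψ_conc : ∀ x ∈ Icc 0 bhat, deriv (deriv ψ) x ≤ 0 :=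
    (contDiff_two_iff_deriv.mp hψC).2.2.continuousOn.nonpos_of_ne_zero
      (hψ_eq ▸ deriv_deriv_expHyp_zero_neg (by positivity) (by positivity) (by positivity))
      fun z hz hz0 => hz.2.ne (hbhat_uniq z hz.1 hz0)
  set κ := (1 - deriv I bs) / deriv φ bs with hκ
  have hφ'bs := hφ' bs hbs_pos.le
  have hslope : deriv I bs + κ * deriv φ bs = 1 := by rw [hκ, div_mul_cancel₀ _ hφ'bs.ne]; ring
  have hvalue : ψ bs / deriv ψ bs = I bs + κ * φ bs := by rw [hκ]; linear_combination -hbs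
  obtain ⟨hVC, hV''⟩ := contDiff_two_ite_div_add_mul hψC hφC hIC (hψ'_pos bs).ne' hvalue hslope
    (deriv_deriv_div_eq_of_ode hσ.ne' (hψ'_pos bs).ne'
      (hψ_eq ▸ expHyp_generator_eq_zero hσ.ne' hΔ2 _ _ bs) (hφODE bs hbs_pos)
      (hIODE bs hbs_pos) hvalue hslope)
  have hV_eq : V = fun x => if x ≤ bs then ψ x / deriv ψ bs else I x + κ * φ x := funext hV
  refine ⟨hV_eq ▸ hVC.contDiffOn, fun x hx => ?_⟩
  simp only [hV_eq, hV'']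
  split_ifs with hxb
  · exact div_nonpos_of_nonpos_of_nonneg (hψ_conc x ⟨hx.le, hxb.trans hbs_le⟩) (hψ'_pos bs).le
  · have hκ_nonpos : κ ≤ 0 :=
      div_nonpos_of_nonneg_of_nonpos (sub_nonneg.mpr (hI' bs hbs_pos.le).2) hφ'bs.le
    nlinarith [hIconc x hx.le, hφ'' x hx.le]

/-- if b* ∈ (0, b̂] satisfies the first-order condition, then the
piecewise function V (equal to ψ(x)/ψ'(b*) for x ≤ b* and to
I(x) + ((1 − I'(b*))/φ'(b*))·φ(x) for x ≥ b*) is C² on (0,∞) and concave there. -/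
theorem stmt_12 (μ σ q : ℝ) (hμ : 0 < μ) (hσ : 0 < σ) (hq : 0 < q)
    (Δ : ℝ) (hΔ : Δ = Real.sqrt (μ ^ 2 + 2 * q * σ ^ 2))
    (ψ : ℝ → ℝ)
    (hψ : ∀ x : ℝ, ψ x =
      σ ^ 2 / Δ * Real.exp (-(μ / σ ^ 2) * x) * Real.sinh (Δ * x / σ ^ 2))
    (bhat : ℝ) (hbhat_pos : 0 < bhat) (hbhat : deriv (deriv ψ) bhat = 0)
    (hbhat_uniq : ∀ b > (0:ℝ), deriv (deriv ψ) b = 0 → b = bhat)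
    (F φ I : ℝ → ℝ)
    (hφC : ContDiff ℝ 2 φ) (hφ0 : φ 0 = 1)
    (hφ' : ∀ x ≥ (0:ℝ), deriv φ x < 0)
    (hφ'' : ∀ x ≥ (0:ℝ), 0 < deriv (deriv φ) x)
    (hφODE : ∀ x > (0:ℝ),
      σ ^ 2 / 2 * deriv (deriv φ) x + (μ - F x) * deriv φ x - q * φ x = 0)
    (hIC : ContDiff ℝ 2 I)
    (hIconc : ∀ x ≥ (0:ℝ), deriv (deriv I) x ≤ 0)
    (hI' : ∀ x ≥ (0:ℝ), 0 ≤ deriv I x ∧ deriv I x ≤ 1)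
    (hIODE : ∀ x > (0:ℝ),
      σ ^ 2 / 2 * deriv (deriv I) x + (μ - F x) * deriv I x - q * I x = -F x)
    (bs : ℝ) (hbs_pos : 0 < bs) (hbs_le : bs ≤ bhat)
    (hbs : I bs - deriv I bs * φ bs / deriv φ bs
      = ψ bs / deriv ψ bs - φ bs / deriv φ bs)
    (V : ℝ → ℝ)
    (hV : ∀ x : ℝ, V x = if x ≤ bs then ψ x / deriv ψ bs
      else I x + (1 - deriv I bs) / deriv φ bs * φ x) :
    ContDiffOn ℝ 2 V (Set.Ioi 0) ∧ ∀ x > (0:ℝ), deriv (deriv V) x ≤ 0 :=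
  stmt_12_general μ σ q hμ hσ hq Δ hΔ ψ hψ bhat hbhat_uniq F φ I hφC hφ' hφ'' hφODE hIC hIconc hI'
    hIODE bs hbs_pos hbs_le hbs V hV
end

section
/- Suppose in addition that F is nondecreasing with F(0) ≥ 0, that b* ∈ (0, b̂] satisfies I(b*) − I'(b*)·φ(b*)/φ'(b*) = ψ(b*)/ψ'(b*) − φ(b*)/φ'(b*), and define V : (0,∞) → ℝ by V(x) = ψ(x)/ψ'(b*) for 0 < x ≤ b* and V(x) = I(x) + ((1 − I'(b*))/φ'(b*))·φ(x) for x ≥ b*. Then V satisfies the Hamilton–Jacobi–Bellman equation: for every x ∈ (0, b*) ∪ (b*, ∞), (σ²/2)·V''(x) + μ·V'(x) − q·V(x) + F(x)·max(1 − V'(x), 0) = 0; moreover V'(x) ≥ 1 for x ∈ (0, b*) and V'(x) ≤ 1 for x ∈ (b*, ∞). -/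
/-! On `(0, b*]` the candidate `ψ / ψ'(b*)` solves the uncontrolled equation
`(σ²/2)V'' + μV' − qV = 0`. Since `ψ''(0) < 0` and `b̂` is the only zero of `ψ''` on `(0, ∞)`,
`ψ'` decreases on `[0, b̂] ⊇ [0, b*]`, so `V' ≥ 1` there and the control term vanishes.
On `[b*, ∞)` the candidate `I + cφ` solves the equation with full control `F`; `c` is chosen so
that `V'(b*) = 1`, which forces `c ≤ 0`, so concavity of `I` and convexity of `φ` make `V'`
nonincreasing, hence `V' ≤ 1` and the control term equals `F (1 − V')`. -/

open Real Set

theorem Continuous.lt_zero_of_unique_zero {g : ℝ → ℝ} (hg : Continuous g) {a b : ℝ}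
    (ha : g a < 0) (hb : ∀ z > a, g z = 0 → z = b) {x : ℝ} (hax : a ≤ x) (hxb : x < b) :
    g x < 0 := by
  by_contra! hx
  obtain ⟨z, ⟨haz, hzx⟩, hz⟩ := intermediate_value_Icc hax hg.continuousOn ⟨ha.le, hx⟩
  have haz' : a < z := haz.lt_of_ne fun h => (h ▸ ha).ne hz
  exact (hzx.trans_lt hxb).ne (hb z haz' hz)

theorem antitoneOn_deriv_of_deriv_deriv_nonpos {f : ℝ → ℝ} {s : Set ℝ} (hs : Convex ℝ s)
    (hf : ContDiff ℝ 2 f) (hf'' : ∀ x ∈ interior s, deriv (deriv f) x ≤ 0) :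
    AntitoneOn (deriv f) s :=
  antitoneOn_of_deriv_nonpos hs hf.differentiable_deriv_two.continuous.continuousOn
    hf.differentiable_deriv_two.differentiableOn hf''

theorem deriv_add_const_mul {f g : ℝ → ℝ} (hf : Differentiable ℝ f) (hg : Differentiable ℝ g)
    (c : ℝ) : deriv (fun y => f y + c * g y) = fun y => deriv f y + c * deriv g y :=
  funext fun y => ((hf y).hasDerivAt.add ((hg y).hasDerivAt.const_mul c)).deriv

noncomputable def dampedSinh (C A B x : ℝ) : ℝ := C * exp (-(A * x)) * sinh (B * x)

section DampedSinh

variable (C A B : ℝ)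

theorem hasDerivAt_const_mul_exp_neg_mul (x : ℝ) :
    HasDerivAt (fun y => C * exp (-(A * y))) (-(A * (C * exp (-(A * x))))) x :=
  ((((hasDerivAt_id x).const_mul A).neg.exp).const_mul C).congr_deriv
    (by simp only [id_eq, Pi.neg_apply, mul_one]; ring)

theorem hasDerivAt_dampedSinh (x : ℝ) :
    HasDerivAt (dampedSinh C A B)
      (C * exp (-(A * x)) * (B * cosh (B * x) - A * sinh (B * x))) x :=
  ((hasDerivAt_const_mul_exp_neg_mul C A x).mul ((hasDerivAt_id x).const_mul B).sinh).congr_deriv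
    (by simp only [id_eq, mul_one]; ring)

theorem deriv_dampedSinh :
    deriv (dampedSinh C A B) =
      fun x => C * exp (-(A * x)) * (B * cosh (B * x) - A * sinh (B * x)) :=
  funext fun x => (hasDerivAt_dampedSinh C A B x).deriv

theorem deriv_deriv_dampedSinh :
    deriv (deriv (dampedSinh C A B)) = fun x =>
      C * exp (-(A * x)) * ((A ^ 2 + B ^ 2) * sinh (B * x) - 2 * A * B * cosh (B * x)) := by
  funext x
  have hB := (hasDerivAt_id x).const_mul B
  have hcs := (hB.cosh.const_mul B).sub (hB.sinh.const_mul A)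
  rw [deriv_dampedSinh]
  exact ((hasDerivAt_const_mul_exp_neg_mul C A x).mul hcs).deriv.trans
    (by simp only [id_eq, Pi.sub_apply, mul_one]; ring)

theorem deriv_dampedSinh_pos (hC : 0 < C) (hAB : |A| < B) (x : ℝ) :
    0 < deriv (dampedSinh C A B) x := by
  obtain ⟨hAB₁, hAB₂⟩ := abs_lt.mp hAB
  have hplus := exp_pos (B * x)
  have hminus := exp_pos (-(B * x))
  rw [← cosh_add_sinh] at hplus
  rw [← cosh_sub_sinh] at hminus
  -- `B cosh t - A sinh t = ((B - A) eᵗ + (B + A) e⁻ᵗ) / 2`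
  have hpos : 0 < B * cosh (B * x) - A * sinh (B * x) := by
    nlinarith [mul_pos (sub_pos.mpr hAB₂) hplus, mul_pos (neg_lt_iff_pos_add.mp hAB₁) hminus]
  rw [deriv_dampedSinh]
  positivity

theorem dampedSinh_ode {μ σ q Δ : ℝ} (hσ : σ ≠ 0) (hΔ : Δ ^ 2 = μ ^ 2 + 2 * q * σ ^ 2)
    (x : ℝ) :
    σ ^ 2 / 2 * deriv (deriv (dampedSinh C (μ / σ ^ 2) (Δ / σ ^ 2))) x
      + μ * deriv (dampedSinh C (μ / σ ^ 2) (Δ / σ ^ 2)) x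
      - q * dampedSinh C (μ / σ ^ 2) (Δ / σ ^ 2) x = 0 := by
  rw [deriv_deriv_dampedSinh, deriv_dampedSinh, dampedSinh]
  beta_reduce
  generalize exp (-(μ / σ ^ 2 * x)) = E, sinh (Δ / σ ^ 2 * x) = S, cosh (Δ / σ ^ 2 * x) = Ch
  field_simp
  linear_combination C * E * S * hΔ

theorem strictAntiOn_deriv_dampedSinh (hC : 0 < C) (hA : 0 < A) (hB : 0 < B) {b : ℝ}
    (hb : ∀ z > 0, deriv (deriv (dampedSinh C A B)) z = 0 → z = b) :
    StrictAntiOn (deriv (dampedSinh C A B)) (Icc 0 b) := by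
  have hcont : Continuous (deriv (deriv (dampedSinh C A B))) := by
    rw [deriv_deriv_dampedSinh]; fun_prop
  have hzero : deriv (deriv (dampedSinh C A B)) 0 < 0 := by
    simp only [deriv_deriv_dampedSinh, mul_zero, neg_zero, exp_zero, sinh_zero, cosh_zero]
    nlinarith [mul_pos hC (mul_pos hA hB)]
  refine strictAntiOn_of_deriv_neg (convex_Icc 0 b)
    (by rw [deriv_dampedSinh]; fun_prop : Continuous _).continuousOn fun x hx => ?_
  rw [interior_Icc] at hx
  exact hcont.lt_zero_of_unique_zero hzero hb hx.1.le hx.2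

end DampedSinh

noncomputable def hjbOperator (σ μ q : ℝ) (F V : ℝ → ℝ) (x : ℝ) : ℝ :=
  σ ^ 2 / 2 * deriv (deriv V) x + μ * deriv V x - q * V x + F x * max (1 - deriv V x) 0

section HJB

variable {σ μ q x : ℝ} {F f : ℝ → ℝ}

theorem hjbOperator_congr {V : ℝ → ℝ} {s : Set ℝ} (h : EqOn V f s) (hs : IsOpen s)
    (hx : x ∈ s) : hjbOperator σ μ q F V x = hjbOperator σ μ q F f x := by
  simp only [hjbOperator, h hx, h.deriv hs hx, (h.deriv hs).deriv hs hx]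

theorem hjbOperator_eq_zero_of_one_le_deriv
    (hf : σ ^ 2 / 2 * deriv (deriv f) x + μ * deriv f x - q * f x = 0) (h1 : 1 ≤ deriv f x) :
    hjbOperator σ μ q F f x = 0 := by
  rw [hjbOperator, max_eq_right (by linarith), mul_zero, add_zero, hf]

theorem hjbOperator_eq_zero_of_deriv_le_one
    (hf : σ ^ 2 / 2 * deriv (deriv f) x + (μ - F x) * deriv f x - q * f x = -F x)
    (h1 : deriv f x ≤ 1) : hjbOperator σ μ q F f x = 0 := by
  rw [hjbOperator, max_eq_left (by linarith)]
  linear_combination hf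

theorem hjbOperator_div_const_eq_zero {k : ℝ} (hk : 0 < k)
    (hf : σ ^ 2 / 2 * deriv (deriv f) x + μ * deriv f x - q * f x = 0) (h1 : k ≤ deriv f x) :
    hjbOperator σ μ q F (fun y => f y / k) x = 0 := by
  have hd : deriv (fun y => f y / k) = fun y => deriv f y / k :=
    funext fun _ => deriv_div_const _
  apply hjbOperator_eq_zero_of_one_le_deriv
  · rw [hd, deriv_div_const]
    linear_combination hf / k
  · rwa [hd, le_div_iff₀ hk, one_mul]

theorem controlled_ode_add_const_mul {I φ : ℝ → ℝ} (hI : ContDiff ℝ 2 I) (hφ : ContDiff ℝ 2 φ)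
    (hIODE : σ ^ 2 / 2 * deriv (deriv I) x + (μ - F x) * deriv I x - q * I x = -F x)
    (hφODE : σ ^ 2 / 2 * deriv (deriv φ) x + (μ - F x) * deriv φ x - q * φ x = 0) (c : ℝ) :
    σ ^ 2 / 2 * deriv (deriv fun y => I y + c * φ y) x
      + (μ - F x) * deriv (fun y => I y + c * φ y) x - q * (I x + c * φ x) = -F x := by
  rw [deriv_add_const_mul (hI.differentiable two_ne_zero) (hφ.differentiable two_ne_zero),
    deriv_add_const_mul hI.differentiable_deriv_two hφ.differentiable_deriv_two]
  linear_combination hIODE + c * hφODE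

end HJB

theorem deriv_le_one_of_smooth_fit {I φ : ℝ → ℝ} {b x : ℝ} (hI : ContDiff ℝ 2 I)
    (hφ : ContDiff ℝ 2 φ) (hI'' : ∀ y > b, deriv (deriv I) y ≤ 0)
    (hφ'' : ∀ y > b, 0 ≤ deriv (deriv φ) y) (hI'b : deriv I b ≤ 1) (hφ'b : deriv φ b < 0)
    (hx : b ≤ x) : deriv (fun y => I y + (1 - deriv I b) / deriv φ b * φ y) x ≤ 1 := by
  set c := (1 - deriv I b) / deriv φ b
  have hc : c ≤ 0 := div_nonpos_of_nonneg_of_nonpos (by linarith) hφ'b.le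
  have hd := deriv_add_const_mul (hI.differentiable two_ne_zero) (hφ.differentiable two_ne_zero) c
  have hanti : AntitoneOn (deriv fun y => I y + c * φ y) (Ici b) := by
    refine antitoneOn_deriv_of_deriv_deriv_nonpos (convex_Ici b)
      (hI.add (contDiff_const.mul hφ)) fun y hy => ?_
    rw [interior_Ici] at hy
    rw [hd, deriv_add_const_mul hI.differentiable_deriv_two hφ.differentiable_deriv_two]
    linarith [hI'' y hy, mul_nonpos_of_nonpos_of_nonneg hc (hφ'' y hy)]
  calc deriv (fun y => I y + c * φ y) x ≤ deriv (fun y => I y + c * φ y) b :=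
        hanti self_mem_Ici hx hx
    _ = 1 := by
      rw [hd]
      show deriv I b + (1 - deriv I b) / deriv φ b * deriv φ b = 1
      rw [div_mul_cancel₀ _ hφ'b.ne]
      ring

theorem stmt_13_general (μ σ q : ℝ) (hμ : 0 < μ) (hσ : 0 < σ) (hq : 0 < q)
    (Δ : ℝ) (hΔ : Δ = Real.sqrt (μ ^ 2 + 2 * q * σ ^ 2))
    (ψ : ℝ → ℝ)
    (hψ : ∀ x : ℝ, ψ x =
      σ ^ 2 / Δ * Real.exp (-(μ / σ ^ 2) * x) * Real.sinh (Δ * x / σ ^ 2))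
    (bhat : ℝ)
    (hbhat_uniq : ∀ b > (0:ℝ), deriv (deriv ψ) b = 0 → b = bhat)
    (F φ I : ℝ → ℝ)
    (hφC : ContDiff ℝ 2 φ)
    (hφ' : ∀ x ≥ (0:ℝ), deriv φ x < 0)
    (hφ'' : ∀ x ≥ (0:ℝ), 0 < deriv (deriv φ) x)
    (hφODE : ∀ x > (0:ℝ),
      σ ^ 2 / 2 * deriv (deriv φ) x + (μ - F x) * deriv φ x - q * φ x = 0)
    (hIC : ContDiff ℝ 2 I)
    (hIconc : ∀ x ≥ (0:ℝ), deriv (deriv I) x ≤ 0)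
    (hI' : ∀ x ≥ (0:ℝ), 0 ≤ deriv I x ∧ deriv I x ≤ 1)
    (hIODE : ∀ x > (0:ℝ),
      σ ^ 2 / 2 * deriv (deriv I) x + (μ - F x) * deriv I x - q * I x = -F x)
    (bs : ℝ) (hbs_pos : 0 < bs) (hbs_le : bs ≤ bhat)
    (V : ℝ → ℝ)
    (hV : ∀ x : ℝ, V x = if x ≤ bs then ψ x / deriv ψ bs
      else I x + (1 - deriv I bs) / deriv φ bs * φ x) :
    (∀ x ∈ Set.Ioo (0:ℝ) bs ∪ Set.Ioi bs,
      σ ^ 2 / 2 * deriv (deriv V) x + μ * deriv V x - q * V x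
        + F x * max (1 - deriv V x) 0 = 0) ∧
      (∀ x ∈ Set.Ioo (0:ℝ) bs, 1 ≤ deriv V x) ∧
      (∀ x ∈ Set.Ioi bs, deriv V x ≤ 1) := by
  have hΔsq : Δ ^ 2 = μ ^ 2 + 2 * q * σ ^ 2 := hΔ ▸ sq_sqrt (by positivity)
  have hΔpos : 0 < Δ := hΔ ▸ sqrt_pos.mpr (by positivity)
  have hAB : |μ / σ ^ 2| < Δ / σ ^ 2 := by
    rw [abs_of_pos (by positivity)]
    gcongr
    nlinarith [mul_pos hq (pow_pos hσ 2)]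
  obtain rfl : ψ = dampedSinh (σ ^ 2 / Δ) (μ / σ ^ 2) (Δ / σ ^ 2) :=
    funext fun x => by rw [hψ, dampedSinh]; ring_nf
  set ψ := dampedSinh (σ ^ 2 / Δ) (μ / σ ^ 2) (Δ / σ ^ 2)
  have hψ'bs : 0 < deriv ψ bs := deriv_dampedSinh_pos _ _ _ (by positivity) hAB bs
  have hψ'_ge : ∀ x ∈ Ioo 0 bs, deriv ψ bs ≤ deriv ψ x := fun x hx =>
    (strictAntiOn_deriv_dampedSinh _ _ _ (by positivity) (by positivity) (by positivity)
      hbhat_uniq ⟨hx.1.le, hx.2.le.trans hbs_le⟩ ⟨hbs_pos.le, hbs_le⟩ hx.2).le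
  have hVL : EqOn V (fun y => ψ y / deriv ψ bs) (Iio bs) :=
    fun y (hy : y < bs) => by simp [hV, hy.le]
  have hVR : EqOn V (fun y => I y + (1 - deriv I bs) / deriv φ bs * φ y) (Ioi bs) :=
    fun y (hy : bs < y) => by simp [hV, hy.not_ge]
  have hV'R : ∀ x ∈ Ioi bs, deriv V x ≤ 1 := fun x hx => by
    rw [hVR.deriv isOpen_Ioi hx]
    exact deriv_le_one_of_smooth_fit hIC hφC (fun y hy => hIconc y (hbs_pos.trans hy).le)
      (fun y hy => (hφ'' y (hbs_pos.trans hy).le).le) (hI' bs hbs_pos.le).2 (hφ' bs hbs_pos.le)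
      hx.le
  refine ⟨?_, fun x hx => ?_, hV'R⟩
  · rintro x (hx | hx)
    · show hjbOperator σ μ q F V x = 0
      rw [hjbOperator_congr hVL isOpen_Iio hx.2]
      exact hjbOperator_div_const_eq_zero hψ'bs (dampedSinh_ode _ hσ.ne' hΔsq x) (hψ'_ge x hx)
    · show hjbOperator σ μ q F V x = 0
      have hx0 : 0 < x := hbs_pos.trans hx
      rw [hjbOperator_congr hVR isOpen_Ioi hx]
      exact hjbOperator_eq_zero_of_deriv_le_one
        (controlled_ode_add_const_mul hIC hφC (hIODE x hx0) (hφODE x hx0) _)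
        (hVR.deriv isOpen_Ioi hx ▸ hV'R x hx)
  · rw [hVL.deriv isOpen_Iio hx.2, deriv_div_const, le_div_iff₀ hψ'bs, one_mul]
    exact hψ'_ge x hx

/-- with F nondecreasing and F(0) ≥ 0, if b* ∈ (0, b̂] satisfies the
first-order condition, the piecewise function V satisfies the HJB equation
(σ²/2)V'' + μV' − qV + F·max(1 − V', 0) = 0 on (0,b*) ∪ (b*,∞); moreover V' ≥ 1 on
(0,b*) and V' ≤ 1 on (b*,∞). -/
theorem stmt_13 (μ σ q : ℝ) (hμ : 0 < μ) (hσ : 0 < σ) (hq : 0 < q)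
    (Δ : ℝ) (hΔ : Δ = Real.sqrt (μ ^ 2 + 2 * q * σ ^ 2))
    (ψ : ℝ → ℝ)
    (hψ : ∀ x : ℝ, ψ x =
      σ ^ 2 / Δ * Real.exp (-(μ / σ ^ 2) * x) * Real.sinh (Δ * x / σ ^ 2))
    (bhat : ℝ) (hbhat_pos : 0 < bhat) (hbhat : deriv (deriv ψ) bhat = 0)
    (hbhat_uniq : ∀ b > (0:ℝ), deriv (deriv ψ) b = 0 → b = bhat)
    (F φ I : ℝ → ℝ)
    (hFmono : MonotoneOn F (Set.Ici 0)) (hF0 : 0 ≤ F 0)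
    (hφC : ContDiff ℝ 2 φ) (hφ0 : φ 0 = 1)
    (hφ' : ∀ x ≥ (0:ℝ), deriv φ x < 0)
    (hφ'' : ∀ x ≥ (0:ℝ), 0 < deriv (deriv φ) x)
    (hφODE : ∀ x > (0:ℝ),
      σ ^ 2 / 2 * deriv (deriv φ) x + (μ - F x) * deriv φ x - q * φ x = 0)
    (hIC : ContDiff ℝ 2 I)
    (hIconc : ∀ x ≥ (0:ℝ), deriv (deriv I) x ≤ 0)
    (hI' : ∀ x ≥ (0:ℝ), 0 ≤ deriv I x ∧ deriv I x ≤ 1)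
    (hIODE : ∀ x > (0:ℝ),
      σ ^ 2 / 2 * deriv (deriv I) x + (μ - F x) * deriv I x - q * I x = -F x)
    (bs : ℝ) (hbs_pos : 0 < bs) (hbs_le : bs ≤ bhat)
    (hbs : I bs - deriv I bs * φ bs / deriv φ bs
      = ψ bs / deriv ψ bs - φ bs / deriv φ bs)
    (V : ℝ → ℝ)
    (hV : ∀ x : ℝ, V x = if x ≤ bs then ψ x / deriv ψ bs
      else I x + (1 - deriv I bs) / deriv φ bs * φ x) :
    (∀ x ∈ Set.Ioo (0:ℝ) bs ∪ Set.Ioi bs,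
      σ ^ 2 / 2 * deriv (deriv V) x + μ * deriv V x - q * V x
        + F x * max (1 - deriv V x) 0 = 0) ∧
      (∀ x ∈ Set.Ioo (0:ℝ) bs, 1 ≤ deriv V x) ∧
      (∀ x ∈ Set.Ioi bs, deriv V x ≤ 1) :=
  stmt_13_general μ σ q hμ hσ hq Δ hΔ ψ hψ bhat hbhat_uniq F φ I hφC hφ' hφ'' hφODE hIC hIconc hI'
    hIODE bs hbs_pos hbs_le V hV
end

section
/- Suppose in addition that F is nondecreasing with F(0) ≥ 0, that I(0) ≥ 0, and that I'(0) − I(0)·φ'(0) ≤ 1. Define V₀ : [0,∞) → ℝ by V₀(x) = I(x) − I(0)·φ(x). Then V₀ is concave on (0,∞), V₀'(x) ≤ 1 for all x > 0, and V₀ satisfies the Hamilton–Jacobi–Bellman equation: for every x > 0, (σ²/2)·V₀''(x) + μ·V₀'(x) − q·V₀(x) + F(x)·(1 − V₀'(x)) = 0. -/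
/-!
Since `φ` solves the homogeneous equation, `V₀ = I - I(0)φ` solves the same linear equation as
`I`, with right-hand side `-F`; rearranged, this is the HJB equation. Concavity comes from
`V₀'' = I'' - I(0)φ'' ≤ 0` on `[0, ∞)`, which also makes `V₀'` nonincreasing there, so
`V₀' ≤ V₀'(0) = I'(0) - I(0)φ'(0) ≤ 1`.
-/

open Set

section SecondDerivative

variable {f g : ℝ → ℝ}

theorem deriv_sub_const_mul_fun (hf : Differentiable ℝ f) (hg : Differentiable ℝ g) (c : ℝ) :
    deriv (fun x => f x - c * g x) = fun x => deriv f x - c * deriv g x := by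
  funext x
  rw [deriv_fun_sub (hf x) ((hg x).const_mul c), deriv_const_mul c (hg x)]

theorem deriv_deriv_sub_const_mul_fun (hf : ContDiff ℝ 2 f) (hg : ContDiff ℝ 2 g) (c : ℝ) :
    deriv (deriv fun x => f x - c * g x) =
      fun x => deriv (deriv f) x - c * deriv (deriv g) x := by
  rw [deriv_sub_const_mul_fun (hf.differentiable two_ne_zero) (hg.differentiable two_ne_zero),
    deriv_sub_const_mul_fun hf.differentiable_deriv_two hg.differentiable_deriv_two]

variable {D : Set ℝ}

theorem concaveOn_of_contDiff_two_of_deriv2_nonpos (hD : Convex ℝ D) (hf : ContDiff ℝ 2 f)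
    (hf'' : ∀ x ∈ D, deriv (deriv f) x ≤ 0) : ConcaveOn ℝ D f :=
  concaveOn_of_deriv2_nonpos hD hf.continuous.continuousOn
    (hf.differentiable two_ne_zero).differentiableOn hf.differentiable_deriv_two.differentiableOn
    fun x hx => hf'' x (interior_subset hx)

theorem antitoneOn_deriv_of_contDiff_two_of_deriv2_nonpos (hD : Convex ℝ D)
    (hf : ContDiff ℝ 2 f) (hf'' : ∀ x ∈ D, deriv (deriv f) x ≤ 0) : AntitoneOn (deriv f) D :=
  antitoneOn_of_deriv_nonpos hD hf.differentiable_deriv_two.continuous.continuousOn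
    hf.differentiable_deriv_two.differentiableOn fun x hx => hf'' x (interior_subset hx)

end SecondDerivative

theorem stmt_14_general (μ σ q : ℝ)
    (F φ I : ℝ → ℝ)
    (hφC : ContDiff ℝ 2 φ)
    (hφ'' : ∀ x ≥ (0:ℝ), 0 < deriv (deriv φ) x)
    (hφODE : ∀ x > (0:ℝ),
      σ ^ 2 / 2 * deriv (deriv φ) x + (μ - F x) * deriv φ x - q * φ x = 0)
    (hIC : ContDiff ℝ 2 I)
    (hIconc : ∀ x ≥ (0:ℝ), deriv (deriv I) x ≤ 0)
    (hIODE : ∀ x > (0:ℝ),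
      σ ^ 2 / 2 * deriv (deriv I) x + (μ - F x) * deriv I x - q * I x = -F x)
    (hI0 : 0 ≤ I 0) (hcond : deriv I 0 - I 0 * deriv φ 0 ≤ 1)
    (V₀ : ℝ → ℝ) (hV₀ : ∀ x : ℝ, V₀ x = I x - I 0 * φ x) :
    ConcaveOn ℝ (Set.Ioi 0) V₀ ∧
      (∀ x > (0:ℝ), deriv (deriv V₀) x ≤ 0) ∧
      (∀ x > (0:ℝ), deriv V₀ x ≤ 1) ∧
      ∀ x > (0:ℝ),
        σ ^ 2 / 2 * deriv (deriv V₀) x + μ * deriv V₀ x - q * V₀ x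
          + F x * (1 - deriv V₀ x) = 0 := by
  have hV : V₀ = fun x => I x - I 0 * φ x := funext hV₀
  have hVC : ContDiff ℝ 2 V₀ := hV ▸ hIC.sub (contDiff_const.mul hφC)
  have hV' : deriv V₀ = fun x => deriv I x - I 0 * deriv φ x := by
    rw [hV, deriv_sub_const_mul_fun (hIC.differentiable two_ne_zero)
      (hφC.differentiable two_ne_zero)]
  have hV'' : deriv (deriv V₀) = fun x => deriv (deriv I) x - I 0 * deriv (deriv φ) x := by
    rw [hV, deriv_deriv_sub_const_mul_fun hIC hφC]
  have hV''_nonpos : ∀ x ∈ Ici (0:ℝ), deriv (deriv V₀) x ≤ 0 := fun x hx => by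
    rw [hV'']
    exact sub_nonpos.2 ((hIconc x hx).trans (mul_nonneg hI0 (hφ'' x hx).le))
  refine ⟨concaveOn_of_contDiff_two_of_deriv2_nonpos (convex_Ioi 0) hVC
      fun x hx => hV''_nonpos x (mem_Ioi.1 hx).le,
    fun x hx => hV''_nonpos x hx.le, fun x hx => ?_, fun x hx => ?_⟩
  · calc deriv V₀ x
        ≤ deriv V₀ 0 := antitoneOn_deriv_of_contDiff_two_of_deriv2_nonpos (convex_Ici 0) hVC
          hV''_nonpos self_mem_Ici hx.le hx.le
      _ ≤ 1 := by rw [hV']; exact hcond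
  · rw [hV'', hV', hV₀ x]
    linear_combination hIODE x hx - I 0 * hφODE x hx

/-- with F nondecreasing, F(0) ≥ 0, I(0) ≥ 0 and
I'(0) − I(0)·φ'(0) ≤ 1, the function V₀(x) = I(x) − I(0)·φ(x) is concave on (0,∞),
satisfies V₀' ≤ 1 on (0,∞), and solves the HJB equation
(σ²/2)V₀'' + μV₀' − qV₀ + F·(1 − V₀') = 0 on (0,∞). -/
theorem stmt_14 (μ σ q : ℝ) (hμ : 0 < μ) (hσ : 0 < σ) (hq : 0 < q)
    (F φ I : ℝ → ℝ)
    (hFmono : MonotoneOn F (Set.Ici 0)) (hF0 : 0 ≤ F 0)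
    (hφC : ContDiff ℝ 2 φ) (hφ0 : φ 0 = 1)
    (hφ' : ∀ x ≥ (0:ℝ), deriv φ x < 0)
    (hφ'' : ∀ x ≥ (0:ℝ), 0 < deriv (deriv φ) x)
    (hφODE : ∀ x > (0:ℝ),
      σ ^ 2 / 2 * deriv (deriv φ) x + (μ - F x) * deriv φ x - q * φ x = 0)
    (hIC : ContDiff ℝ 2 I)
    (hIconc : ∀ x ≥ (0:ℝ), deriv (deriv I) x ≤ 0)
    (hI' : ∀ x ≥ (0:ℝ), 0 ≤ deriv I x ∧ deriv I x ≤ 1)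
    (hIODE : ∀ x > (0:ℝ),
      σ ^ 2 / 2 * deriv (deriv I) x + (μ - F x) * deriv I x - q * I x = -F x)
    (hI0 : 0 ≤ I 0) (hcond : deriv I 0 - I 0 * deriv φ 0 ≤ 1)
    (V₀ : ℝ → ℝ) (hV₀ : ∀ x : ℝ, V₀ x = I x - I 0 * φ x) :
    ConcaveOn ℝ (Set.Ioi 0) V₀ ∧
      (∀ x > (0:ℝ), deriv (deriv V₀) x ≤ 0) ∧
      (∀ x > (0:ℝ), deriv V₀ x ≤ 1) ∧
      ∀ x > (0:ℝ),
        σ ^ 2 / 2 * deriv (deriv V₀) x + μ * deriv V₀ x - q * V₀ x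
          + F x * (1 - deriv V₀ x) = 0 :=
  stmt_14_general μ σ q F φ I hφC hφ'' hφODE hIC hIconc hIODE hI0 hcond V₀ hV₀
end

section
/- Fix K > 0, q > 0, σ > 0, m ∈ ℝ and set ν := q/K. Define D : ℝ → ℝ by D(z) = (1/Γ(ν))·exp(−z²/4)·∫₀^∞ t^{ν−1}·exp(−z·t − t²/2) dt, and H : ℝ → ℝ by H(x) = exp(K·(x − m/K)²/(2σ²))·D(√(2K)·(x − m/K)/σ). Then H is twice continuously differentiable, H(x) > 0 for all x ∈ ℝ, and H satisfies (σ²/2)·H''(x) + (m − K·x)·H'(x) − q·H(x) = 0 for all x ∈ ℝ. -/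
open MeasureTheory

/-! `D_{-ν}(z) = e^{-z²/4} Φ_{ν-1}(z) / Γ(ν)` with `Φ_p = pcfIntegral p`, so the Gaussian factors
in `H` cancel and `H(x) = Φ_{ν-1}(a(x - m/K)) / Γ(ν)` with `a = √(2K)/σ`. Differentiating under the
integral sign gives `Φ_p' = -Φ_{p+1}`, and integrating `d/dt (t^ν e^{-zt - t²/2})` over `(0, ∞)`
gives `Φ_{ν+1} + z Φ_ν = ν Φ_{ν-1}`; together they say that `y = Φ_{ν-1}` solves
`y'' - z y' - ν y = 0`, which the substitution `z = a(x - m/K)` turns into the Ornstein–Uhlenbeck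
equation because `σ²a² = 2K`. Positivity is that of the integrand. -/

open Real Set Filter
open scoped ContDiff Topology

noncomputable def pcfIntegral (p z : ℝ) : ℝ :=
  ∫ t in Ioi (0 : ℝ), t ^ p * exp (-z * t - t ^ 2 / 2)

theorem integrableOn_rpow_mul_exp_mul_sub_sq {p : ℝ} (hp : -1 < p) (c : ℝ) :
    IntegrableOn (fun t : ℝ => t ^ p * exp (c * t - t ^ 2 / 2)) (Ioi 0) := by
  have hdom : IntegrableOn (fun t : ℝ => exp (c ^ 2) * (t ^ p * exp (-(1 / 4) * t ^ 2))) (Ioi 0) :=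
    (integrableOn_rpow_mul_exp_neg_mul_sq (by norm_num) hp).const_mul _
  refine hdom.mono' (by fun_prop) ?_
  filter_upwards [ae_restrict_mem measurableSet_Ioi] with t (ht : 0 < t)
  have htp : 0 ≤ t ^ p := rpow_nonneg ht.le p
  rw [norm_of_nonneg (by positivity), mul_left_comm, ← exp_add]
  gcongr
  nlinarith [sq_nonneg (c - t / 2)]

theorem hasDerivAt_pcfIntegral {p : ℝ} (hp : -1 < p) (z : ℝ) :
    HasDerivAt (pcfIntegral p) (-pcfIntegral (p + 1) z) z := by
  have hp1 : -1 < p + 1 := by linarith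
  have key := hasDerivAt_integral_of_dominated_loc_of_deriv_le
    (μ := volume.restrict (Ioi 0)) (x₀ := z) (Metric.ball_mem_nhds z one_pos)
    (F := fun z t => t ^ p * exp (-z * t - t ^ 2 / 2))
    (F' := fun z t => -(t ^ (p + 1) * exp (-z * t - t ^ 2 / 2)))
    (bound := fun t => t ^ (p + 1) * exp ((|z| + 1) * t - t ^ 2 / 2))
    (Eventually.of_forall fun x => by fun_prop) (integrableOn_rpow_mul_exp_mul_sub_sq hp (-z))
    (by fun_prop) ?_ (integrableOn_rpow_mul_exp_mul_sub_sq hp1 (|z| + 1)) ?_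
  · have hderiv : HasDerivAt (pcfIntegral p)
        (∫ t in Ioi (0 : ℝ), -(t ^ (p + 1) * exp (-z * t - t ^ 2 / 2))) z := key.2
    rwa [integral_neg] at hderiv
  · filter_upwards [ae_restrict_mem measurableSet_Ioi] with t (ht : 0 < t)
    intro x hx
    have hxz : -x ≤ |z| + 1 := by
      have := abs_sub_abs_le_abs_sub x z
      rw [Metric.mem_ball, Real.dist_eq] at hx
      linarith [neg_le_abs x]
    rw [norm_neg, norm_of_nonneg (by positivity)]
    gcongr
  · filter_upwards [ae_restrict_mem measurableSet_Ioi] with t (ht : 0 < t)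
    intro x _
    have hexp : HasDerivAt (fun x : ℝ => -x * t - t ^ 2 / 2) (-t) x := by
      simpa using ((hasDerivAt_id x).neg.mul_const t).sub_const (t ^ 2 / 2)
    refine (hexp.exp.const_mul (t ^ p)).congr_deriv ?_
    rw [rpow_add_one ht.ne']
    ring

theorem contDiff_pcfIntegral {p : ℝ} (hp : -1 < p) : ContDiff ℝ ∞ (pcfIntegral p) := by
  refine contDiff_infty.2 fun n => ?_
  induction n generalizing p with
  | zero =>
    exact contDiff_zero.2 (continuous_iff_continuousAt.2 fun z =>
      (hasDerivAt_pcfIntegral hp z).continuousAt)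
  | succ n ih =>
    have hderiv : deriv (pcfIntegral p) = fun z => -pcfIntegral (p + 1) z :=
      funext fun z => (hasDerivAt_pcfIntegral hp z).deriv
    rw [Nat.cast_succ, contDiff_succ_iff_deriv, hderiv]
    exact ⟨fun z => (hasDerivAt_pcfIntegral hp z).differentiableAt, by simp,
      (ih (by linarith)).neg⟩

theorem pcfIntegral_pos {p : ℝ} (hp : -1 < p) (z : ℝ) : 0 < pcfIntegral p z := by
  have hpos : ∀ t ∈ Ioi (0 : ℝ), 0 < t ^ p * exp (-z * t - t ^ 2 / 2) :=
    fun t (ht : 0 < t) => by positivity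
  rw [pcfIntegral, setIntegral_pos_iff_support_of_nonneg_ae
    ((ae_restrict_mem measurableSet_Ioi).mono fun t ht => (hpos t ht).le)
    (by simpa using integrableOn_rpow_mul_exp_mul_sub_sq hp (-z))]
  calc (0 : ENNReal) < volume (Ioi (0 : ℝ)) := by simp
    _ ≤ _ := measure_mono fun t ht => show t ∈ Function.support _ ∩ Ioi 0 from ⟨(hpos t ht).ne', ht⟩

theorem tendsto_rpow_mul_exp_mul_sub_sq_atTop (p c : ℝ) :
    Tendsto (fun t : ℝ => t ^ p * exp (c * t - t ^ 2 / 2)) atTop (𝓝 0) := by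
  have hdom :
      Tendsto (fun t : ℝ => exp ((c + 1) ^ 2 / 2) * (t ^ p * exp (-1 * t))) atTop (𝓝 0) := by
    simpa using (tendsto_rpow_mul_exp_neg_mul_atTop_nhds_zero p 1 one_pos).const_mul _
  refine squeeze_zero' ?_ ?_ hdom
  · filter_upwards [eventually_ge_atTop 0] with t ht
    exact mul_nonneg (rpow_nonneg ht p) (exp_pos _).le
  · filter_upwards [eventually_ge_atTop 0] with t ht
    have htp : 0 ≤ t ^ p := rpow_nonneg ht p
    rw [mul_left_comm, ← exp_add]
    gcongr
    nlinarith [sq_nonneg (c + 1 - t)]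

theorem pcfIntegral_recurrence {ν : ℝ} (hν : 0 < ν) (z : ℝ) :
    pcfIntegral (ν + 1) z + z * pcfIntegral ν z = ν * pcfIntegral (ν - 1) z := by
  set e : ℝ → ℝ := fun t => exp (-z * t - t ^ 2 / 2)
  have hint : ∀ p : ℝ, -1 < p → IntegrableOn (fun t => t ^ p * e t) (Ioi 0) :=
    fun p hp => integrableOn_rpow_mul_exp_mul_sub_sq hp (-z)
  have hderiv : ∀ t ∈ Ioi (0 : ℝ), HasDerivAt (fun t => t ^ ν * e t)
      (ν * (t ^ (ν - 1) * e t) - z * (t ^ ν * e t) - t ^ (ν + 1) * e t) t := by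
    intro t (ht : 0 < t)
    have he : HasDerivAt (fun t : ℝ => -z * t - t ^ 2 / 2) (-z - t) t := by
      simpa using ((hasDerivAt_id t).const_mul (-z)).fun_sub ((hasDerivAt_pow 2 t).div_const 2)
    refine ((hasDerivAt_rpow_const (Or.inl ht.ne')).mul he.exp).congr_deriv ?_
    rw [rpow_add_one ht.ne']
    ring
  have hcont : ContinuousWithinAt (fun t => t ^ ν * e t) (Ici 0) 0 :=
    ((continuousAt_rpow_const 0 ν (Or.inr hν.le)).mul (by fun_prop)).continuousWithinAt
  have h₁ := (hint (ν - 1) (by linarith)).const_mul ν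
  have h₂ := (hint ν (by linarith)).const_mul z
  have h₃ := hint (ν + 1) (by linarith)
  have hFTC := integral_Ioi_of_hasDerivAt_of_tendsto hcont hderiv ((h₁.sub h₂).sub h₃)
    (tendsto_rpow_mul_exp_mul_sub_sq_atTop ν (-z))
  rw [integral_sub (by exact h₁.sub h₂) h₃, integral_sub h₁ h₂, integral_const_mul,
    integral_const_mul, zero_rpow hν.ne', zero_mul, sub_zero] at hFTC
  unfold pcfIntegral
  linarith

theorem ode_comp_affine_of_hermite_ode {y y' y'' : ℝ → ℝ} {ν : ℝ}
    (hy : ∀ z, HasDerivAt y (y' z) z) (hy' : ∀ z, HasDerivAt y' (y'' z) z)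
    (hode : ∀ z, y'' z - z * y' z - ν * y z = 0) {K σ a : ℝ} (ha : σ ^ 2 * a ^ 2 = 2 * K)
    {c x₀ : ℝ} {f : ℝ → ℝ} (hf : ∀ x, f x = c * y (a * (x - x₀))) (x : ℝ) :
    σ ^ 2 / 2 * deriv (deriv f) x + K * (x₀ - x) * deriv f x - K * ν * f x = 0 := by
  have hlin : ∀ x, HasDerivAt (fun x => a * (x - x₀)) a x := fun x => by
    simpa using ((hasDerivAt_id x).sub_const x₀).const_mul a
  have h₁ : ∀ x, HasDerivAt f (c * (y' (a * (x - x₀)) * a)) x := fun x => by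
    rw [funext hf]
    exact ((hy _).comp x (hlin x)).const_mul c
  have h₂ : HasDerivAt (deriv f) (c * (y'' (a * (x - x₀)) * a * a)) x := by
    rw [funext fun x => (h₁ x).deriv]
    exact (((hy' _).comp x (hlin x)).mul_const a).const_mul c
  rw [h₂.deriv, (h₁ x).deriv, hf]
  linear_combination (c * K) * hode (a * (x - x₀)) + (c * y'' (a * (x - x₀)) / 2) * ha

theorem sqrt_two_mul_mul_div_sq_div_four {K : ℝ} (hK : 0 ≤ K) (σ y : ℝ) :
    (√(2 * K) * y / σ) ^ 2 / 4 = K * y ^ 2 / (2 * σ ^ 2) := by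
  rw [div_pow, mul_pow, sq_sqrt (by positivity)]
  ring

/-- with ν = q/K, D the parabolic cylinder function D_{−ν} and
H(x) = exp(K(x − m/K)²/(2σ²))·D(√(2K)(x − m/K)/σ), the function H is C², positive,
and satisfies (σ²/2)H'' + (m − Kx)H' − qH = 0 on ℝ. -/
theorem stmt_15 (K q σ m : ℝ) (hK : 0 < K) (hq : 0 < q) (hσ : 0 < σ)
    (ν : ℝ) (hν : ν = q / K)
    (D : ℝ → ℝ)
    (hD : ∀ z : ℝ, D z = 1 / Real.Gamma ν * Real.exp (-z ^ 2 / 4) *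
      ∫ t in Set.Ioi (0:ℝ), t ^ (ν - 1) * Real.exp (-z * t - t ^ 2 / 2))
    (H : ℝ → ℝ)
    (hH : ∀ x : ℝ, H x = Real.exp (K * (x - m / K) ^ 2 / (2 * σ ^ 2)) *
      D (Real.sqrt (2 * K) * (x - m / K) / σ)) :
    ContDiff ℝ 2 H ∧ (∀ x : ℝ, 0 < H x) ∧
      ∀ x : ℝ, σ ^ 2 / 2 * deriv (deriv H) x + (m - K * x) * deriv H x - q * H x = 0 := by
  have hν₀ : 0 < ν := hν ▸ div_pos hq hK
  have ha : σ ^ 2 * (√(2 * K) / σ) ^ 2 = 2 * K := by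
    rw [div_pow, sq_sqrt (by positivity), mul_div_cancel₀ _ (pow_ne_zero 2 hσ.ne')]
  have hHΦ : ∀ x, H x = (Gamma ν)⁻¹ * pcfIntegral (ν - 1) (√(2 * K) / σ * (x - m / K)) := by
    intro x
    rw [hH, hD, neg_div, sqrt_two_mul_mul_div_sq_div_four hK.le, pcfIntegral,
      mul_div_right_comm (√(2 * K)), mul_assoc (1 / _), mul_left_comm, ← mul_assoc (exp _),
      ← exp_add, add_neg_cancel, exp_zero, one_mul, one_div]
  refine ⟨?_, fun x => ?_, fun x => ?_⟩
  · rw [funext hHΦ]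
    exact contDiff_const.mul ((contDiff_infty.1 (contDiff_pcfIntegral (by linarith)) 2).comp
      (by fun_prop))
  · rw [hHΦ]
    exact mul_pos (inv_pos.2 (Gamma_pos_of_pos hν₀)) (pcfIntegral_pos (by linarith) _)
  · have hy : ∀ z, HasDerivAt (pcfIntegral (ν - 1)) (-pcfIntegral ν z) z := fun z => by
      simpa using hasDerivAt_pcfIntegral (p := ν - 1) (by linarith) z
    have hy' : ∀ z, HasDerivAt (fun z => -pcfIntegral ν z) (pcfIntegral (ν + 1) z) z :=
      fun z => by simpa using (hasDerivAt_pcfIntegral (p := ν) (by linarith) z).fun_neg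
    have hode : ∀ z, pcfIntegral (ν + 1) z - z * -pcfIntegral ν z - ν * pcfIntegral (ν - 1) z = 0 :=
      fun z => by linarith [pcfIntegral_recurrence hν₀ z]
    have hOU := ode_comp_affine_of_hermite_ode hy hy' hode ha hHΦ x
    rwa [mul_sub, mul_div_cancel₀ _ hK.ne', hν, mul_div_cancel₀ _ hK.ne'] at hOU
end

section
/- Fix K > 0, q > 0, σ > 0, m ∈ ℝ and set ν := q/K. Define D : ℝ → ℝ by D(z) = (1/Γ(ν))·exp(−z²/4)·∫₀^∞ t^{ν−1}·exp(−z·t − t²/2) dt, and H : ℝ → ℝ by H(x) = exp(K·(x − m/K)²/(2σ²))·D(√(2K)·(x − m/K)/σ). Then H is strictly decreasing on ℝ and H(x) → 0 as x → +∞. -/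
open MeasureTheory

/-- with ν = q/K, D the parabolic cylinder function D_{−ν} and
H(x) = exp(K(x − m/K)²/(2σ²))·D(√(2K)(x − m/K)/σ), the function H is strictly
decreasing on ℝ and tends to 0 at +∞. -/
theorem stmt_16 (K q σ m : ℝ) (hK : 0 < K) (hq : 0 < q) (hσ : 0 < σ)
    (ν : ℝ) (hν : ν = q / K)
    (D : ℝ → ℝ)
    (hD : ∀ z : ℝ, D z = 1 / Real.Gamma ν * Real.exp (-z ^ 2 / 4) *
      ∫ t in Set.Ioi (0:ℝ), t ^ (ν - 1) * Real.exp (-z * t - t ^ 2 / 2))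
    (H : ℝ → ℝ)
    (hH : ∀ x : ℝ, H x = Real.exp (K * (x - m / K) ^ 2 / (2 * σ ^ 2)) *
      D (Real.sqrt (2 * K) * (x - m / K) / σ)) :
    StrictAnti H ∧ Filter.Tendsto H Filter.atTop (nhds 0) := by
  have hν0 : 0 < ν := hν ▸ div_pos hq hK
  have hΓ : 0 < Real.Gamma ν := Real.Gamma_pos_of_pos hν0
  set f : ℝ → ℝ → ℝ := fun z t => t ^ (ν - 1) * Real.exp (-z * t - t ^ 2 / 2) with hfdef
  set G : ℝ → ℝ := fun z => ∫ t in Set.Ioi (0:ℝ), f z t with hGdef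
  -- measurability
  have hmeas : ∀ z : ℝ, AEStronglyMeasurable (f z) (volume.restrict (Set.Ioi (0:ℝ))) := by
    intro z
    apply ContinuousOn.aestronglyMeasurable _ measurableSet_Ioi
    apply ContinuousOn.mul
    · exact ContinuousOn.rpow_const continuousOn_id
        (fun t ht => Or.inl (ne_of_gt (Set.mem_Ioi.mp ht)))
    · exact Continuous.continuousOn (by continuity)
  -- integrability
  have hint : ∀ z : ℝ, IntegrableOn (f z) (Set.Ioi (0:ℝ)) := by
    intro z
    have base : IntegrableOn (fun t : ℝ => t ^ (ν - 1) * Real.exp (-(1/4) * t ^ 2))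
        (Set.Ioi (0:ℝ)) :=
      integrableOn_rpow_mul_exp_neg_mul_sq (by norm_num) (by linarith)
    refine Integrable.mono' (base.const_mul (Real.exp (z ^ 2))) (hmeas z) ?_
    filter_upwards [ae_restrict_mem measurableSet_Ioi] with t ht
    have ht0 : (0:ℝ) < t := ht
    have hnn : 0 ≤ f z t := by
      apply mul_nonneg (Real.rpow_nonneg ht0.le _) (Real.exp_pos _).le
    rw [Real.norm_eq_abs, abs_of_nonneg hnn]
    have hexp : Real.exp (-z * t - t ^ 2 / 2) ≤ Real.exp (z ^ 2) * Real.exp (-(1/4) * t ^ 2) := by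
      rw [← Real.exp_add]
      apply Real.exp_le_exp.mpr
      nlinarith [sq_nonneg (z + t / 2)]
    calc f z t ≤ t ^ (ν - 1) * (Real.exp (z ^ 2) * Real.exp (-(1/4) * t ^ 2)) := by
          exact mul_le_mul_of_nonneg_left hexp (Real.rpow_nonneg ht0.le _)
      _ = Real.exp (z ^ 2) * (t ^ (ν - 1) * Real.exp (-(1/4) * t ^ 2)) := by ring
  -- H in terms of G
  have hHG : ∀ x : ℝ, H x = 1 / Real.Gamma ν *
      G (Real.sqrt (2 * K) * (x - m / K) / σ) := by
    intro x
    rw [hH, hD]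
    set z := Real.sqrt (2 * K) * (x - m / K) / σ with hz
    have hsq : z ^ 2 = 2 * K * (x - m / K) ^ 2 / σ ^ 2 := by
      rw [hz, div_pow, mul_pow, Real.sq_sqrt (by positivity : (0:ℝ) ≤ 2 * K)]
    have hA : K * (x - m / K) ^ 2 / (2 * σ ^ 2) = -(-z ^ 2 / 4) := by
      rw [hsq]; field_simp; ring
    rw [hA, Real.exp_neg]
    simp only [hGdef, hfdef]
    have he : Real.exp (-z ^ 2 / 4) ≠ 0 := (Real.exp_pos _).ne'
    field_simp
  -- G is strictly decreasing
  have hGanti : ∀ z1 z2 : ℝ, z1 < z2 → G z2 < G z1 := by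
    intro z1 z2 h12
    have hsub : G z1 - G z2 = ∫ t in Set.Ioi (0:ℝ), (f z1 t - f z2 t) :=
      (integral_sub (hint z1) (hint z2)).symm
    have hpos : 0 < ∫ t in Set.Ioi (0:ℝ), (f z1 t - f z2 t) := by
      have hnn : 0 ≤ᵐ[volume.restrict (Set.Ioi (0:ℝ))] fun t => f z1 t - f z2 t := by
        filter_upwards [ae_restrict_mem measurableSet_Ioi] with t ht
        have ht0 : (0:ℝ) < t := ht
        have : Real.exp (-z2 * t - t ^ 2 / 2) < Real.exp (-z1 * t - t ^ 2 / 2) := by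
          apply Real.exp_lt_exp.mpr; nlinarith
        have : f z2 t < f z1 t :=
          mul_lt_mul_of_pos_left this (Real.rpow_pos_of_pos ht0 _)
        simp only [Pi.zero_apply]
        linarith
      rw [setIntegral_pos_iff_support_of_nonneg_ae hnn ((hint z1).sub (hint z2))]
      have hsub2 : Set.Ioi (0:ℝ) ⊆ Function.support (fun t => f z1 t - f z2 t) ∩ Set.Ioi 0 := by
        intro t ht
        refine ⟨?_, ht⟩
        have ht0 : (0:ℝ) < t := ht
        have hlt : Real.exp (-z2 * t - t ^ 2 / 2) < Real.exp (-z1 * t - t ^ 2 / 2) := by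
          apply Real.exp_lt_exp.mpr; nlinarith
        have : f z2 t < f z1 t :=
          mul_lt_mul_of_pos_left hlt (Real.rpow_pos_of_pos ht0 _)
        simp only [Function.mem_support, ne_eq]
        intro h
        linarith
      calc (0:ENNReal) < volume (Set.Ioi (0:ℝ)) := by simp [Real.volume_Ioi]
        _ ≤ _ := measure_mono hsub2
    linarith [hsub, hpos]
  -- G tends to 0 at +∞
  have hGtend : Filter.Tendsto G Filter.atTop (nhds 0) := by
    have h0 : (0:ℝ) = ∫ t in Set.Ioi (0:ℝ), (0:ℝ) := by simp
    rw [h0]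
    apply MeasureTheory.tendsto_integral_filter_of_dominated_convergence
      (fun t => t ^ (ν - 1) * Real.exp (-(1/2) * t ^ 2))
    · exact Filter.Eventually.of_forall hmeas
    · filter_upwards [Filter.eventually_ge_atTop (0:ℝ)] with z hz
      filter_upwards [ae_restrict_mem measurableSet_Ioi] with t ht
      have ht0 : (0:ℝ) < t := ht
      have hnn : 0 ≤ f z t :=
        mul_nonneg (Real.rpow_nonneg ht0.le _) (Real.exp_pos _).le
      rw [Real.norm_eq_abs, abs_of_nonneg hnn]
      apply mul_le_mul_of_nonneg_left _ (Real.rpow_nonneg ht0.le _)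
      apply Real.exp_le_exp.mpr
      nlinarith
    · exact integrableOn_rpow_mul_exp_neg_mul_sq (by norm_num) (by linarith)
    · filter_upwards [ae_restrict_mem measurableSet_Ioi] with t ht
      have ht0 : (0:ℝ) < t := ht
      have heq : ∀ z : ℝ, f z t = (t ^ (ν - 1) * Real.exp (-t ^ 2 / 2)) * Real.exp (-(z * t)) := by
        intro z
        simp only [hfdef]
        rw [mul_assoc, ← Real.exp_add]
        ring_nf
      simp only [heq]
      have h1 : Filter.Tendsto (fun z : ℝ => -(z * t)) Filter.atTop Filter.atBot :=
        Filter.tendsto_neg_atTop_atBot.comp (Filter.Tendsto.atTop_mul_const ht0 Filter.tendsto_id)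
      have h2 : Filter.Tendsto (fun z : ℝ => Real.exp (-(z * t))) Filter.atTop (nhds 0) :=
        Real.tendsto_exp_atBot.comp h1
      simpa using h2.const_mul (t ^ (ν - 1) * Real.exp (-t ^ 2 / 2))
  -- assemble
  have hc : 0 < 1 / Real.Gamma ν := by positivity
  have hzmono : StrictMono (fun x : ℝ => Real.sqrt (2 * K) * (x - m / K) / σ) := by
    intro a b hab
    have hs : 0 < Real.sqrt (2 * K) := Real.sqrt_pos.mpr (by positivity)
    exact div_lt_div_of_pos_right
      (mul_lt_mul_of_pos_left (sub_lt_sub_right hab _) hs) hσ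
  constructor
  · intro a b hab
    rw [hHG a, hHG b]
    exact mul_lt_mul_of_pos_left (hGanti _ _ (hzmono hab)) hc
  · have hztop : Filter.Tendsto (fun x : ℝ => Real.sqrt (2 * K) * (x - m / K) / σ)
        Filter.atTop Filter.atTop := by
      apply Filter.Tendsto.atTop_div_const hσ
      apply Filter.Tendsto.const_mul_atTop (Real.sqrt_pos.mpr (by positivity : (0:ℝ) < 2 * K))
      exact Filter.tendsto_atTop_add_const_right _ _ Filter.tendsto_id
    have := (hGtend.comp hztop).const_mul (1 / Real.Gamma ν)
    rw [mul_zero] at this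
    apply this.congr
    intro x
    exact (hHG x).symm
end
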